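/- arXiv:math/9503225 — 4 statements merged into one kernel-verified Lean document; each statement's English description precedes it below -/
import Mathlib

section
/- Let n ≥ 1, set N = n, and let a_1, …, a_n be nonzero real numbers. Then the diagonal matrix J = Σ_{k=1}^{n} a_k e_{kk} satisfies the reflection equation R J₁ R^{t₁} J₂ = J₂ R^{t₁} J₁ R with respect to the type-A R-matrix of size N. (This is the case AI, corresponding to the symmetric space SU(n)/SO(n), of Theorem 1(1).) -/
open Matrix

noncomputable section

/-- Kronecker product of two `N × N` matrices, with `(eᵢⱼ ⊗ eₖₗ)` having
`((i,k),(j,l))`-entry `1`. -/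
def kron {N : ℕ} (A B : Matrix (Fin N) (Fin N) ℂ) :
    Matrix (Fin N × Fin N) (Fin N × Fin N) ℂ :=
  fun p r => A p.1 r.1 * B p.2 r.2

/-- Partial transpose in the first tensor factor. -/
def ptransp {N : ℕ} (R : Matrix (Fin N × Fin N) (Fin N × Fin N) ℂ) :
    Matrix (Fin N × Fin N) (Fin N × Fin N) ℂ :=
  fun p r => R (r.1, p.2) (p.1, r.2)

/-- The reflection equation `R J₁ R^{t₁} J₂ = J₂ R^{t₁} J₁ R`. -/
def ReflectionEq {N : ℕ} (R : Matrix (Fin N × Fin N) (Fin N × Fin N) ℂ)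
    (J : Matrix (Fin N) (Fin N) ℂ) : Prop :=
  R * kron J 1 * ptransp R * kron 1 J = kron 1 J * ptransp R * kron J 1 * R

/-- Matrix units. -/
def e {N : ℕ} (i j : Fin N) : Matrix (Fin N) (Fin N) ℂ :=
  Matrix.single i j 1

/-- The type-A R-matrix of size `N`:
`R = q^{-1/N} ( Σ_{i,j} q^{δ_{ij}} e_{ii} ⊗ e_{jj} + (q − q⁻¹) Σ_{j<i} e_{ij} ⊗ e_{ji} )`. -/
def RmatA (q : ℝ) (N : ℕ) : Matrix (Fin N × Fin N) (Fin N × Fin N) ℂ :=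
  ((q ^ (-1 / (N : ℝ)) : ℝ) : ℂ) •
    ((∑ i : Fin N, ∑ j : Fin N,
        ((q ^ (if i = j then (1 : ℝ) else 0) : ℝ) : ℂ) • kron (e i i) (e j j))
      + ((q : ℂ) - (q : ℂ)⁻¹) •
        ∑ i : Fin N, ∑ j : Fin N,
          if (j : ℕ) < (i : ℕ) then kron (e i j) (e j i) else 0)

/-!
Write `R = A + X` with `A` diagonal and `X = ∑ β (i, j) e_{ij} ⊗ e_{ji}` (`weightedFlip β`);
then `R^{t₁} = A + Y` with `Y = ∑ β (j, i) e_{ij} ⊗ e_{ij}`. For diagonal `J`, `X` intertwines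
`J₁` and `J₂`, `Y` cannot tell `J₁` from `J₂` (it lives on the vectors `e_i ⊗ e_i`), `A` commutes
with `X` and `Y` because its entries are symmetric and constant on the `e_i ⊗ e_i`, and
`X Y = Y X = 0` since `β` vanishes on the diagonal. Expanding both sides of the reflection
equation, the four terms then match pairwise.
-/

section Ring

variable {M : Type*} [Ring M]

theorem reflection_identity_of_relations {A X Y J K : M}
    (hAJ : Commute A J) (hAK : Commute A K) (hJK : Commute J K)
    (hAX : Commute A X) (hAY : Commute A Y)
    (hXJ : X * J = K * X) (hXK : X * K = J * X)
    (hJY : J * Y = K * Y) (hYJ : Y * J = Y * K)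
    (hXY : X * Y = 0) (hYX : Y * X = 0) :
    (A + X) * J * (A + Y) * K = K * (A + Y) * J * (A + X) := by
  have hAJAK : A * J * A * K = K * A * J * A := by
    rw [((hAK.mul_left hJK).mul_left hAK).eq]
    simp only [mul_assoc]
  have hAJYK : A * J * Y * K = K * Y * J * A := by
    have hJYK : J * Y * K = K * Y * J := by rw [hJY, mul_assoc, ← hYJ, mul_assoc]
    rw [mul_assoc A, mul_assoc A, ((hAJ.mul_right hAY).mul_right hAK).eq, hJYK]
  have hXJAK : X * J * A * K = K * A * J * X := by
    rw [hXJ, mul_assoc K, ← hAX.eq, mul_assoc, mul_assoc, hXK]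
    simp only [mul_assoc]
  have hXJYK : X * J * Y * K = 0 := by rw [hXJ, mul_assoc K, hXY, mul_zero, zero_mul]
  have hKYJX : K * Y * J * X = 0 := by
    rw [mul_assoc, ← hXK, ← mul_assoc, mul_assoc K, hYX, mul_zero, zero_mul]
  simp only [add_mul, mul_add, hAJAK, hAJYK, hXJAK, hXJYK, hKYJX]
  abel

end Ring

section Matrices

variable {N : ℕ}

def weightedFlip (β : Fin N × Fin N → ℂ) : Matrix (Fin N × Fin N) (Fin N × Fin N) ℂ :=
  of fun p r => if r = p.swap then β p else 0

theorem weightedFlip_apply (β : Fin N × Fin N → ℂ) (p r : Fin N × Fin N) :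
    weightedFlip β p r = if r = p.swap then β p else 0 := rfl

theorem weightedFlip_eq_sum_single (β : Fin N × Fin N → ℂ) :
    weightedFlip β = ∑ p, single p p.swap (β p) := by
  ext p r
  simp [weightedFlip_apply, Matrix.sum_apply, single_apply, ite_and, eq_comm]

theorem kron_single_single (i j k l : Fin N) (a b : ℂ) :
    kron (single i j a) (single k l b) = single (i, k) (j, l) (a * b) := by
  ext p r
  simp only [kron, single_apply, Prod.ext_iff]
  split_ifs <;> simp_all

theorem kron_diagonal_one (d : Fin N → ℂ) : kron (diagonal d) 1 = diagonal fun s => d s.1 := by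
  ext p r
  simp only [kron, one_apply, diagonal_apply, Prod.ext_iff]
  split_ifs <;> simp_all

theorem kron_one_diagonal (d : Fin N → ℂ) : kron 1 (diagonal d) = diagonal fun s => d s.2 := by
  ext p r
  simp only [kron, one_apply, diagonal_apply, Prod.ext_iff]
  split_ifs <;> simp_all

theorem ptransp_add (R S : Matrix (Fin N × Fin N) (Fin N × Fin N) ℂ) :
    ptransp (R + S) = ptransp R + ptransp S := rfl

theorem ptransp_diagonal (α : Fin N × Fin N → ℂ) : ptransp (diagonal α) = diagonal α := by
  ext ⟨i, k⟩ ⟨j, l⟩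
  simp only [ptransp, diagonal_apply, Prod.mk.injEq]
  split_ifs <;> simp_all

theorem ptransp_weightedFlip_apply (β : Fin N × Fin N → ℂ) (p r : Fin N × Fin N) :
    ptransp (weightedFlip β) p r = if p.1 = p.2 ∧ r.1 = r.2 then β (r.1, p.1) else 0 := by
  simp only [ptransp, weightedFlip_apply, Prod.ext_iff, Prod.fst_swap, Prod.snd_swap]
  split_ifs <;> simp_all [eq_comm]

theorem weightedFlip_mul_apply (β : Fin N × Fin N → ℂ)
    (M : Matrix (Fin N × Fin N) (Fin N × Fin N) ℂ) (p r : Fin N × Fin N) :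
    (weightedFlip β * M) p r = β p * M p.swap r := by
  simp [mul_apply, weightedFlip_apply, ite_mul]

theorem mul_weightedFlip_apply (β : Fin N × Fin N → ℂ)
    (M : Matrix (Fin N × Fin N) (Fin N × Fin N) ℂ) (p r : Fin N × Fin N) :
    (M * weightedFlip β) p r = M p r.swap * β r.swap := by
  rw [mul_apply, Finset.sum_eq_single r.swap]
  · simp [weightedFlip_apply]
  · rintro s - hs
    rw [weightedFlip_apply, if_neg fun h => hs (by rw [h, Prod.swap_swap]), mul_zero]
  · simp

theorem weightedFlip_mul_diagonal (β δ : Fin N × Fin N → ℂ) :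
    weightedFlip β * diagonal δ = diagonal (δ ∘ Prod.swap) * weightedFlip β := by
  ext p r
  simp only [mul_diagonal, diagonal_mul, weightedFlip_apply, Function.comp_apply]
  split_ifs with h <;> simp [h, mul_comm]

theorem commute_diagonal_weightedFlip {α : Fin N × Fin N → ℂ} (hα : ∀ p, α p.swap = α p)
    (β : Fin N × Fin N → ℂ) : Commute (diagonal α) (weightedFlip β) := by
  have hα' : α ∘ Prod.swap = α := funext hα
  rw [Commute, SemiconjBy, weightedFlip_mul_diagonal, hα']

theorem diagonal_mul_ptransp_weightedFlip {δ δ' : Fin N × Fin N → ℂ}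
    (h : ∀ i, δ (i, i) = δ' (i, i)) (β : Fin N × Fin N → ℂ) :
    diagonal δ * ptransp (weightedFlip β) = diagonal δ' * ptransp (weightedFlip β) := by
  ext ⟨i, k⟩ r
  simp only [diagonal_mul, ptransp_weightedFlip_apply]
  split_ifs with hik
  · rw [hik.1, h]
  · simp

theorem ptransp_weightedFlip_mul_diagonal {δ δ' : Fin N × Fin N → ℂ}
    (h : ∀ i, δ (i, i) = δ' (i, i)) (β : Fin N × Fin N → ℂ) :
    ptransp (weightedFlip β) * diagonal δ = ptransp (weightedFlip β) * diagonal δ' := by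
  ext p ⟨j, l⟩
  simp only [mul_diagonal, ptransp_weightedFlip_apply]
  split_ifs with hjl
  · rw [hjl.2, h]
  · simp

theorem commute_diagonal_ptransp_weightedFlip {α : Fin N × Fin N → ℂ}
    (hα : ∀ i j, α (i, i) = α (j, j)) (β : Fin N × Fin N → ℂ) :
    Commute (diagonal α) (ptransp (weightedFlip β)) := by
  ext ⟨i, k⟩ ⟨j, l⟩
  simp only [diagonal_mul, mul_diagonal, ptransp_weightedFlip_apply]
  split_ifs with h
  · rw [h.1, h.2, hα k l, mul_comm]
  · simp

theorem weightedFlip_mul_ptransp_weightedFlip {β : Fin N × Fin N → ℂ}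
    (hβ : ∀ i, β (i, i) = 0) (β' : Fin N × Fin N → ℂ) :
    weightedFlip β * ptransp (weightedFlip β') = 0 := by
  ext ⟨i, k⟩ r
  simp only [weightedFlip_mul_apply, ptransp_weightedFlip_apply, Prod.swap_prod_mk,
    Matrix.zero_apply]
  split_ifs with h
  · rw [h.1, hβ, zero_mul]
  · simp

theorem ptransp_weightedFlip_mul_weightedFlip {β : Fin N × Fin N → ℂ}
    (hβ : ∀ i, β (i, i) = 0) (β' : Fin N × Fin N → ℂ) :
    ptransp (weightedFlip β') * weightedFlip β = 0 := by
  ext p ⟨j, l⟩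
  simp only [mul_weightedFlip_apply, ptransp_weightedFlip_apply, Prod.swap_prod_mk,
    Matrix.zero_apply]
  split_ifs with h
  · rw [h.2, hβ, mul_zero]
  · simp

theorem reflectionEq_diagonal_add_weightedFlip {α β : Fin N × Fin N → ℂ}
    (hα_swap : ∀ p, α p.swap = α p) (hα_diag : ∀ i j, α (i, i) = α (j, j))
    (hβ : ∀ i, β (i, i) = 0) (d : Fin N → ℂ) :
    ReflectionEq (diagonal α + weightedFlip β) (diagonal d) := by
  rw [ReflectionEq, ptransp_add, ptransp_diagonal, kron_diagonal_one, kron_one_diagonal]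
  exact reflection_identity_of_relations (commute_diagonal _ _) (commute_diagonal _ _)
    (commute_diagonal _ _) (commute_diagonal_weightedFlip hα_swap β)
    (commute_diagonal_ptransp_weightedFlip hα_diag β) (weightedFlip_mul_diagonal β _)
    (weightedFlip_mul_diagonal β _)
    (diagonal_mul_ptransp_weightedFlip (δ' := fun s => d s.2) (fun _ => rfl) β)
    (ptransp_weightedFlip_mul_diagonal (δ' := fun s => d s.2) (fun _ => rfl) β)
    (weightedFlip_mul_ptransp_weightedFlip hβ β) (ptransp_weightedFlip_mul_weightedFlip hβ β)

end Matrices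

theorem RmatA_eq (q : ℝ) (N : ℕ) :
    RmatA q N =
      diagonal (fun p => ((q ^ (-1 / (N : ℝ)) : ℝ) : ℂ) *
        if p.1 = p.2 then (q : ℂ) else 1) +
      weightedFlip (fun p => ((q ^ (-1 / (N : ℝ)) : ℝ) : ℂ) * ((q : ℂ) - (q : ℂ)⁻¹) *
        if (p.2 : ℕ) < p.1 then 1 else 0) := by
  have hdiag : ∑ i : Fin N, ∑ j : Fin N,
      ((q ^ (if i = j then (1 : ℝ) else 0) : ℝ) : ℂ) • kron (e i i) (e j j) =
        diagonal fun p => if p.1 = p.2 then (q : ℂ) else 1 := by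
    rw [← sum_single_eq_diagonal, Fintype.sum_prod_type]
    refine Finset.sum_congr rfl fun i _ => Finset.sum_congr rfl fun j _ => ?_
    rw [e, e, kron_single_single, smul_single, mul_one]
    split_ifs <;> simp
  have hflip : ∑ i : Fin N, ∑ j : Fin N,
      (if (j : ℕ) < (i : ℕ) then kron (e i j) (e j i) else 0) =
        weightedFlip fun p => if (p.2 : ℕ) < p.1 then 1 else 0 := by
    rw [weightedFlip_eq_sum_single, Fintype.sum_prod_type]
    refine Finset.sum_congr rfl fun i _ => Finset.sum_congr rfl fun j _ => ?_
    rw [e, e, kron_single_single, mul_one]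
    split_ifs <;> simp
  rw [RmatA, hdiag, hflip]
  ext p r
  simp only [Matrix.smul_apply, Matrix.add_apply, diagonal_apply, weightedFlip_apply,
    smul_eq_mul]
  split_ifs <;> ring

theorem reflection_equation_AI_general (q : ℝ) (n : ℕ) (a : Fin n → ℝ) :
    ReflectionEq (RmatA q n) (∑ k : Fin n, ((a k : ℂ)) • e k k) := by
  have hJ : ∑ k : Fin n, ((a k : ℂ)) • e k k = diagonal fun k => (a k : ℂ) := by
    simp only [e, smul_single, smul_eq_mul, mul_one, sum_single_eq_diagonal]
  rw [RmatA_eq, hJ]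
  exact reflectionEq_diagonal_add_weightedFlip (fun _ => by simp [eq_comm]) (fun _ _ => by simp)
    (fun _ => by simp) _

/-- type AI: a diagonal matrix with nonzero real entries satisfies the
reflection equation for the type-A R-matrix. -/
theorem reflection_equation_AI (q : ℝ) (hq0 : 0 < q) (hq1 : q < 1)
    (n : ℕ) (hn : 1 ≤ n) (a : Fin n → ℝ) (ha : ∀ k, a k ≠ 0) :
    ReflectionEq (RmatA q n) (∑ k : Fin n, ((a k : ℂ)) • e k k) :=
  reflection_equation_AI_general q n a
end
end

section
/- Let n ≥ 1, set N = 2n, and let a_1, …, a_{2n} be nonzero real numbers such that a_{2k−1} = q·a_{2k} for 1 ≤ k ≤ n. Then the matrix J = Σ_{k=1}^{n} ( −a_{2k−1} e_{2k,2k−1} + a_{2k} e_{2k−1,2k} ) satisfies the reflection equation R J₁ R^{t₁} J₂ = J₂ R^{t₁} J₁ R with respect to the type-A R-matrix of size N. (This is the case AII, corresponding to the symmetric space SU(2n)/Sp(2n), of Theorem 1(1).) -/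
open Matrix

noncomputable section

/-- The index (0-based) of the (1-based) index `2k-1`, for `1 ≤ k ≤ n`, inside `Fin (2*n)`. -/
def dblo {n : ℕ} (k : Fin n) : Fin (2 * n) := ⟨2 * (k : ℕ), by have := k.isLt; omega⟩

/-- The index (0-based) of the (1-based) index `2k`, for `1 ≤ k ≤ n`, inside `Fin (2*n)`. -/
def dble {n : ℕ} (k : Fin n) : Fin (2 * n) := ⟨2 * (k : ℕ) + 1, by have := k.isLt; omega⟩

/-
The reflection equation is checked entrywise. After the scalar prefactor of `R` is dropped, the
`((i,k),(j,l))`-entries of `R J₁ R^{t₁} J₂` and of `J₂ R^{t₁} J₁ R` are explicit quadratic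
expressions in the entries of `J`. Here `J` is supported on the pairs `{2k-1, 2k}` of adjacent
indices, with `J_{2k,2k-1} = -q J_{2k-1,2k}`, so a product `J_{ab} J_{cd}` can only be nonzero when
`b` is the partner of `a` and `d` the partner of `c`. This leaves a handful of index patterns, and
on each of them the two entries agree by the `q`-antisymmetry of `J` and because no index lies
strictly between the two members of a pair.
-/

theorem ite_lt_ite_eq_comm {ι α β : Type*} [Zero α] [LT ι] [DecidableLT ι] [DecidableEq β]
    (u v : ι) (x y : β) (a : α) :
    (if u < v then if x = y then a else 0 else 0) =
      if x = y then if u < v then a else 0 else 0 := by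
  split_ifs <;> rfl

theorem ReflectionEq.smul {N : ℕ} {R : Matrix (Fin N × Fin N) (Fin N × Fin N) ℂ}
    {J : Matrix (Fin N) (Fin N) ℂ} (h : ReflectionEq R J) (c : ℂ) : ReflectionEq (c • R) J := by
  have hpt : ptransp (c • R) = c • ptransp R := rfl
  simp only [ReflectionEq, hpt, smul_mul_assoc, mul_smul_comm, smul_smul] at h ⊢
  rw [h]

namespace ReflectionEquation

section Pairings

variable {ι K : Type*} [LinearOrder ι] [Field K]

def qDelta (q : K) (x y : ι) : K := if x = y then q else 1

@[simp] lemma qDelta_self (q : K) (x : ι) : qDelta q x x = q := if_pos rfl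

lemma qDelta_of_ne (q : K) {x y : ι} (h : x ≠ y) : qDelta q x y = 1 := if_neg h

def lhsEntry (q : K) (J : Matrix ι ι K) (i k j l : ι) : K :=
  qDelta q i k * qDelta q j k * (J i j * J k l)
  + (q - q⁻¹) * (if k < j then qDelta q i k * (J i k * J j l) else 0)
  + (q - q⁻¹) * (if k < i then qDelta q j i * (J k j * J i l) else 0)
  + (q - q⁻¹) ^ 2 * (if k < i ∧ i < j then J k i * J j l else 0)

def rhsEntry (q : K) (J : Matrix ι ι K) (i k j l : ι) : K :=
  qDelta q i l * qDelta q j l * (J k l * J i j)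
  + (q - q⁻¹) * (if j < l then qDelta q i j * (J k j * J i l) else 0)
  + (q - q⁻¹) * (if i < l then qDelta q j l * (J k i * J l j) else 0)
  + (q - q⁻¹) ^ 2 * (if i < j ∧ j < l then J k i * J j l else 0)

/-- `σ` pairs up the indices so that no third index lies strictly between `a` and `σ a`. -/
structure IsAdjacentPairing (σ : ι → ι) : Prop where
  involutive : Function.Involutive σ
  ne_self : ∀ a, σ a ≠ a
  lt_iff_lt : ∀ a b, b ≠ a → b ≠ σ a → (a < b ↔ σ a < b)

structure IsQSkewOn (σ : ι → ι) (q : K) (J : Matrix ι ι K) : Prop where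
  apply_eq_zero : ∀ a b, b ≠ σ a → J a b = 0
  apply_swap : ∀ a, a < σ a → J (σ a) a = -q * J a (σ a)

variable {σ : ι → ι} {q : K} {J : Matrix ι ι K}

lemma IsAdjacentPairing.lt_iff_lt' (hσ : IsAdjacentPairing σ) {a b : ι} (hba : b ≠ a)
    (hbσ : b ≠ σ a) : b < a ↔ b < σ a := by
  rw [← not_iff_not, not_lt, not_lt, le_iff_lt_or_eq, le_iff_lt_or_eq,
    hσ.lt_iff_lt a b hba hbσ, or_iff_left hba.symm, or_iff_left (Ne.symm hbσ)]

namespace IsQSkewOn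

lemma apply_mul_apply_eq_zero (hJ : IsQSkewOn σ q J) {a b c d : ι} (h : ¬(b = σ a ∧ d = σ c)) :
    J a b * J c d = 0 := by
  rcases not_and_or.mp h with h | h
  · rw [hJ.apply_eq_zero a b h, zero_mul]
  · rw [hJ.apply_eq_zero c d h, mul_zero]

lemma apply_self (hJ : IsQSkewOn σ q J) (hσ : IsAdjacentPairing σ) (a : ι) : J a a = 0 :=
  hJ.apply_eq_zero a a (hσ.ne_self a).symm

lemma apply_swap' (hJ : IsQSkewOn σ q J) (hσ : IsAdjacentPairing σ) {a : ι} (h : σ a < a) :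
    J a (σ a) = -q * J (σ a) a := by
  simpa only [hσ.involutive a] using hJ.apply_swap (σ a) (by rwa [hσ.involutive a])

/-- The cross term `(q - q⁻¹) e_{ij} ⊗ e_{ji}` of the R-matrix mixes the two entries of `J` on a
pair; whichever member of the pair is smaller, the result is the same multiple of `J (σ a) a`. -/
lemma apply_add_ite_lt (hJ : IsQSkewOn σ q J) (hσ : IsAdjacentPairing σ) (hq : q ≠ 0) (a : ι) :
    J a (σ a) + (q - q⁻¹) * (if σ a < a then J (σ a) a else 0) = -q⁻¹ * J (σ a) a := by
  rcases lt_or_gt_of_ne (hσ.ne_self a) with h | h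
  · rw [if_pos h, hJ.apply_swap' hσ h]
    ring
  · rw [if_neg h.not_gt, hJ.apply_swap a h]
    field_simp
    ring

end IsQSkewOn

lemma lhsEntry_eq_rhsEntry_pair_pair_of_ne (hσ : IsAdjacentPairing σ) (hJ : IsQSkewOn σ q J)
    (hq : q ≠ 0) {i j : ι} (hji : j ≠ i) (hjσ : j ≠ σ i) :
    lhsEntry q J i (σ i) j (σ j) = rhsEntry q J i (σ i) j (σ j) := by
  have hσσ := hσ.involutive
  have hiσj : i ≠ σ j := fun h => hjσ (by rw [h, hσσ j])
  simp only [lhsEntry, rhsEntry, hJ.apply_eq_zero i j hjσ,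
    hJ.apply_eq_zero (σ i) (σ j) (hσσ.injective.ne hjσ),
    hJ.apply_eq_zero (σ i) j (by rwa [hσσ i]), hJ.apply_eq_zero i (σ j) (hσσ.injective.ne hji),
    qDelta_of_ne q (hσ.ne_self i).symm, qDelta_of_ne q (hσ.ne_self j).symm,
    ← hσ.lt_iff_lt i j hji hjσ, ← hσ.lt_iff_lt' (Ne.symm hji) hiσj,
    mul_zero, ite_self, add_zero, zero_add, one_mul]
  by_cases hij : i < j
  · have key₁ := hJ.apply_add_ite_lt hσ hq i
    have key₂ := hJ.apply_add_ite_lt hσ hq (σ j)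
    rw [hσσ j] at key₂
    simp only [hij, if_true, and_true, true_and]
    -- both sides equal `-(q - q⁻¹) q⁻¹ J (σ i) i J j (σ j)`
    split_ifs at key₁ key₂ ⊢ <;>
      linear_combination ((q - q⁻¹) * J j (σ j)) * key₁ - ((q - q⁻¹) * J (σ i) i) * key₂
  · simp only [hij, if_false, and_false, false_and, mul_zero, add_zero]

lemma lhsEntry_eq_rhsEntry_pair_pair (hσ : IsAdjacentPairing σ) (hJ : IsQSkewOn σ q J)
    (hq : q ≠ 0) (i j : ι) :
    lhsEntry q J i (σ i) j (σ j) = rhsEntry q J i (σ i) j (σ j) := by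
  have hne := hσ.ne_self i
  by_cases hji : j = i
  · subst hji
    simp only [lhsEntry, rhsEntry, hJ.apply_self hσ, qDelta_self, qDelta_of_ne q hne.symm,
      mul_zero, lt_irrefl, and_false, false_and, if_false, add_zero, zero_add, mul_one, one_mul]
    rcases lt_or_gt_of_ne hne with h | h
    · simp only [h, h.not_gt, if_true, if_false, hJ.apply_swap' hσ h]
      ring
    · simp only [h, h.not_gt, if_true, if_false, hJ.apply_swap j h]
      ring
  by_cases hjσ : j = σ i
  · subst hjσ
    have h₁ : ¬(σ i < i ∧ i < σ i) := fun h => lt_asymm h.1 h.2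
    have h₂ : ¬(i < σ i ∧ σ i < i) := fun h => lt_asymm h.1 h.2
    simp only [lhsEntry, rhsEntry, hσ.involutive i, hJ.apply_self hσ, qDelta_self,
      qDelta_of_ne q hne, qDelta_of_ne q hne.symm, mul_zero, lt_irrefl, ite_self, if_false, h₁, h₂]
    ring
  exact lhsEntry_eq_rhsEntry_pair_pair_of_ne hσ hJ hq hji hjσ

lemma lhsEntry_eq_rhsEntry_map (hσ : IsAdjacentPairing σ) (hJ : IsQSkewOn σ q J) {i k : ι}
    (hkσ : k ≠ σ i) :
    lhsEntry q J i k (σ i) (σ k) = rhsEntry q J i k (σ i) (σ k) := by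
  have hσσ := hσ.involutive
  have hne := hσ.ne_self i
  by_cases hki : k = i
  · subst hki
    simp only [lhsEntry, rhsEntry, hJ.apply_self hσ, qDelta_self, qDelta_of_ne q hne,
      qDelta_of_ne q hne.symm, mul_zero, lt_irrefl, ite_self, if_false]
    ring
  · have hiσk : i ≠ σ k := fun h => hkσ (by rw [h, hσσ k])
    simp only [lhsEntry, rhsEntry, hJ.apply_eq_zero i k hkσ,
      hJ.apply_eq_zero k (σ i) (hσσ.injective.ne (Ne.symm hki)), hJ.apply_eq_zero k i hiσk,
      qDelta_of_ne q (Ne.symm hki), qDelta_of_ne q (Ne.symm hkσ), qDelta_of_ne q hiσk,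
      qDelta_of_ne q (hσσ.injective.ne (Ne.symm hki)), mul_zero, zero_mul, ite_self, add_zero]
    ring

lemma lhsEntry_eq_rhsEntry_map_swap (hσ : IsAdjacentPairing σ) (hJ : IsQSkewOn σ q J)
    {i k : ι} (hik : i ≠ k) (hiσk : i ≠ σ k) :
    lhsEntry q J i k (σ k) (σ i) = rhsEntry q J i k (σ k) (σ i) := by
  have hσσ := hσ.involutive
  have hkσi : k ≠ σ i := fun h => hiσk (by rw [h, hσσ i])
  have hord : k < i ↔ σ k < σ i :=
    (hσ.lt_iff_lt k i hik hiσk).trans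
      (hσ.lt_iff_lt' (Ne.symm hiσk) (hσσ.injective.ne (Ne.symm hik)))
  simp only [lhsEntry, rhsEntry, hJ.apply_eq_zero i (σ k) (hσσ.injective.ne (Ne.symm hik)),
    hJ.apply_eq_zero k (σ i) (hσσ.injective.ne hik), hJ.apply_eq_zero i k hkσi,
    hJ.apply_eq_zero k i hiσk, qDelta_of_ne q hiσk, qDelta_of_ne q (Ne.symm hiσk), hord,
    mul_zero, zero_mul, ite_self, add_zero, zero_add]

lemma lhsEntry_eq_rhsEntry_of_not_paired (hσ : IsAdjacentPairing σ) (hJ : IsQSkewOn σ q J)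
    {i k j l : ι} (hQ : ¬(k = σ i ∧ l = σ j)) (hP : ¬(j = σ i ∧ l = σ k))
    (hS : ¬(j = σ k ∧ l = σ i)) :
    lhsEntry q J i k j l = rhsEntry q J i k j l := by
  have hσσ := hσ.involutive
  have hQ' : ¬(i = σ k ∧ l = σ j) := by rwa [eq_comm, hσσ.eq_iff]
  have h₁ : J i j * J k l = 0 := hJ.apply_mul_apply_eq_zero hP
  have h₂ : J i k * J j l = 0 := hJ.apply_mul_apply_eq_zero hQ
  have h₃ : J k j * J i l = 0 := hJ.apply_mul_apply_eq_zero hS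
  have h₄ : J k i * J j l = 0 := hJ.apply_mul_apply_eq_zero hQ'
  have h₅ : J k l * J i j = 0 := by rw [mul_comm, h₁]
  have h₆ : J k i * J l j = 0 := hJ.apply_mul_apply_eq_zero (by rwa [eq_comm (a := j), hσσ.eq_iff])
  simp only [lhsEntry, rhsEntry, h₁, h₂, h₃, h₄, h₅, h₆, mul_zero, ite_self, add_zero]

theorem lhsEntry_eq_rhsEntry (hσ : IsAdjacentPairing σ) (hJ : IsQSkewOn σ q J) (hq : q ≠ 0)
    (i k j l : ι) : lhsEntry q J i k j l = rhsEntry q J i k j l := by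
  have hσσ := hσ.involutive
  by_cases hQ : k = σ i ∧ l = σ j
  · obtain ⟨rfl, rfl⟩ := hQ
    exact lhsEntry_eq_rhsEntry_pair_pair hσ hJ hq i j
  by_cases hP : j = σ i ∧ l = σ k
  · obtain ⟨rfl, rfl⟩ := hP
    exact lhsEntry_eq_rhsEntry_map hσ hJ fun h => hQ ⟨h, by rw [h, hσσ]⟩
  by_cases hS : j = σ k ∧ l = σ i
  · obtain ⟨rfl, rfl⟩ := hS
    exact lhsEntry_eq_rhsEntry_map_swap hσ hJ (fun h => hP ⟨by rw [h], by rw [h]⟩)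
      (fun h => hQ ⟨by rw [h, hσσ], by rw [h]⟩)
  exact lhsEntry_eq_rhsEntry_of_not_paired hσ hJ hQ hP hS

end Pairings

section RMatrix

variable {N : ℕ} (q : ℂ) (J : Matrix (Fin N) (Fin N) ℂ) (i k j l : Fin N)

def rMatrix : Matrix (Fin N × Fin N) (Fin N × Fin N) ℂ :=
  of fun p r => (if p.1 = r.1 ∧ p.2 = r.2 then qDelta q p.1 p.2 else 0)
    + (q - q⁻¹) * (if p.2 = r.1 ∧ p.1 = r.2 ∧ r.1 < p.1 then 1 else 0)

lemma rMatrix_mul_kron_apply :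
    (rMatrix q * kron J 1 : Matrix (Fin N × Fin N) _ ℂ) (i, k) (j, l) =
      (if k = l then qDelta q i k * J i j else 0)
      + (q - q⁻¹) * (if i = l ∧ k < i then J k j else 0) := by
  simp only [rMatrix, qDelta, mul_apply, Fintype.sum_prod_type, of_apply, kron,
    one_apply, ite_and, mul_ite, ite_mul, mul_zero, zero_mul, mul_one, one_mul,
    add_mul, Finset.sum_add_distrib, Finset.sum_ite_eq, Finset.sum_ite_eq',
    Finset.mem_univ, if_true]

lemma rMatrix_mul_kron_mul_ptransp_apply :
    (rMatrix q * kron J 1 * ptransp (rMatrix q) : Matrix (Fin N × Fin N) _ ℂ) (i, k) (j, l) =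
      (if k = l then qDelta q i k * qDelta q j k * J i j else 0)
      + (q - q⁻¹) * (if j = l ∧ k < j then qDelta q i k * J i k else 0)
      + (q - q⁻¹) * (if i = l ∧ k < i then qDelta q j i * J k j else 0)
      + (q - q⁻¹) ^ 2 * (if j = l ∧ k < i ∧ i < j then J k i else 0) := by
  rw [mul_apply]
  simp only [Fintype.sum_prod_type, rMatrix_mul_kron_apply]
  simp only [ptransp, rMatrix, qDelta, of_apply,
    ite_and, mul_ite, ite_mul, mul_zero, zero_mul, mul_one, one_mul,
    mul_add, add_mul, Finset.sum_add_distrib, Finset.sum_ite_eq, Finset.sum_ite_eq',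
    Finset.mem_univ, if_true, Finset.sum_const_zero,
    Finset.sum_ite_irrel, ite_add_zero, ite_lt_ite_eq_comm]
  split_ifs <;> first | ring1 | (exfalso; simp only [Fin.ext_iff, Fin.lt_def, not_lt] at *; omega)

lemma lhs_apply :
    (rMatrix q * kron J 1 * ptransp (rMatrix q) * kron 1 J : Matrix (Fin N × Fin N) _ ℂ)
      (i, k) (j, l) = lhsEntry q J i k j l := by
  rw [mul_apply]
  simp only [Fintype.sum_prod_type, rMatrix_mul_kron_mul_ptransp_apply]
  simp only [lhsEntry, kron, one_apply, ite_and, mul_ite, ite_mul, mul_zero, zero_mul,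
    one_mul, add_mul, Finset.sum_add_distrib, Finset.sum_ite_eq, Finset.sum_ite_eq',
    Finset.mem_univ, if_true, Finset.sum_const_zero,
    Finset.sum_ite_irrel, ite_add_zero]
  split_ifs <;> ring1

lemma kron_mul_ptransp_apply :
    (kron 1 J * ptransp (rMatrix q) : Matrix (Fin N × Fin N) _ ℂ) (i, k) (j, l) =
      (if j = i then qDelta q j l * J k l else 0)
      + (q - q⁻¹) * (if j = l ∧ i < j then J k i else 0) := by
  simp only [mul_apply, Fintype.sum_prod_type, ptransp, rMatrix, qDelta, of_apply, kron,
    one_apply, ite_and, mul_ite, ite_mul, mul_zero, zero_mul, mul_one, one_mul,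
    mul_add, Finset.sum_add_distrib, Finset.sum_ite_eq, Finset.sum_ite_eq',
    Finset.mem_univ, if_true, Finset.sum_const_zero,
    Finset.sum_ite_irrel, ite_lt_ite_eq_comm]
  split_ifs <;> first | ring1 | (exfalso; simp only [Fin.ext_iff, Fin.lt_def, not_lt] at *; omega)

lemma kron_mul_ptransp_mul_kron_apply :
    (kron 1 J * ptransp (rMatrix q) * kron J 1 : Matrix (Fin N × Fin N) _ ℂ) (i, k) (j, l) =
      qDelta q i l * (J k l * J i j) + (q - q⁻¹) * (if i < l then J k i * J l j else 0) := by
  rw [mul_apply]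
  simp only [Fintype.sum_prod_type, kron_mul_ptransp_apply]
  simp only [qDelta, kron, one_apply, ite_and, mul_ite, ite_mul, mul_zero, zero_mul, mul_one,
    one_mul, add_mul, Finset.sum_add_distrib, Finset.sum_ite_eq',
    Finset.mem_univ, if_true,
    ite_add_zero]
  split_ifs <;> ring1

lemma rhs_apply :
    (kron 1 J * ptransp (rMatrix q) * kron J 1 * rMatrix q : Matrix (Fin N × Fin N) _ ℂ)
      (i, k) (j, l) = rhsEntry q J i k j l := by
  rw [mul_apply]
  simp only [Fintype.sum_prod_type, kron_mul_ptransp_mul_kron_apply]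
  simp only [rhsEntry, rMatrix, qDelta, of_apply, ite_and, mul_ite, ite_mul, mul_zero, zero_mul,
    mul_one, one_mul, mul_add, add_mul, Finset.sum_add_distrib,
    Finset.sum_ite_eq', Finset.mem_univ, if_true, Finset.sum_const_zero,
    Finset.sum_ite_irrel, ite_add_zero]
  split_ifs <;> ring1

variable {q J} in
theorem reflectionEq_rMatrix {σ : Fin N → Fin N} (hσ : IsAdjacentPairing σ)
    (hJ : IsQSkewOn σ q J) (hq : q ≠ 0) : ReflectionEq (rMatrix q) J :=
  Matrix.ext fun ⟨i, k⟩ ⟨j, l⟩ => by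
    rw [lhs_apply, rhs_apply, lhsEntry_eq_rhsEntry hσ hJ hq]

end RMatrix

lemma RmatA_eq_smul_rMatrix (q : ℝ) (N : ℕ) :
    RmatA q N = ((q ^ (-1 / (N : ℝ)) : ℝ) : ℂ) • rMatrix (q : ℂ) := by
  unfold RmatA
  congr 1
  ext ⟨i, k⟩ ⟨j, l⟩
  simp only [Matrix.add_apply, Matrix.sum_apply, Matrix.smul_apply, kron, e, single_apply,
    rMatrix, qDelta, of_apply, smul_eq_mul, Fin.val_fin_lt, Matrix.zero_apply,
    apply_ite (fun M : Matrix (Fin N × Fin N) (Fin N × Fin N) ℂ => M (i, k) (j, l)),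
    apply_ite (fun x : ℝ => q ^ x), Real.rpow_one, Real.rpow_zero, ite_and, mul_ite, mul_zero,
    mul_one,    Finset.sum_ite_eq', Finset.mem_univ, if_true, Finset.sum_ite_irrel,
    Finset.sum_const_zero, ite_lt_ite_eq_comm]
  split_ifs <;> subst_vars <;> simp_all

section PairSwap

variable {n : ℕ}

/-- Swaps `dblo k` and `dble k`, i.e. the indices `2k-1` and `2k` of the paper. -/
def pairSwap (n : ℕ) (x : Fin (2 * n)) : Fin (2 * n) :=
  ⟨if x.val % 2 = 0 then x.val + 1 else x.val - 1, by have := x.isLt; split <;> omega⟩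

lemma isAdjacentPairing_pairSwap (n : ℕ) : IsAdjacentPairing (pairSwap n) where
  involutive x := Fin.ext (by simp only [pairSwap]; split_ifs <;> omega)
  ne_self x h := by
    have := congrArg Fin.val h
    simp only [pairSwap] at this
    split_ifs at this <;> omega
  lt_iff_lt a b h₁ h₂ := by
    simp only [Fin.lt_def, pairSwap, ne_eq, Fin.ext_iff] at *
    split_ifs at * <;> omega

lemma pairSwap_dblo (m : Fin n) : pairSwap n (dblo m) = dble m :=
  Fin.ext (by simp [pairSwap, dblo, dble])

lemma pairSwap_dble (m : Fin n) : pairSwap n (dble m) = dblo m := by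
  rw [← pairSwap_dblo, (isAdjacentPairing_pairSwap n).involutive]

lemma exists_dblo_eq_of_lt_pairSwap {a : Fin (2 * n)} (h : a < pairSwap n a) :
    ∃ m, dblo m = a := by
  refine ⟨⟨a / 2, by omega⟩, Fin.ext ?_⟩
  simp only [Fin.lt_def, pairSwap] at h
  simp only [dblo]
  split_ifs at h <;> omega

variable (c d : Fin n → ℂ)

def pairMatrix : Matrix (Fin (2 * n)) (Fin (2 * n)) ℂ :=
  ∑ k, (c k • e (dble k) (dblo k) + d k • e (dblo k) (dble k))

lemma pairMatrix_apply_of_ne {a b : Fin (2 * n)} (hb : b ≠ pairSwap n a) :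
    pairMatrix c d a b = 0 := by
  rw [pairMatrix, Matrix.sum_apply]
  refine Finset.sum_eq_zero fun k _ => ?_
  have h₁ : ¬(dble k = a ∧ dblo k = b) := by
    rintro ⟨rfl, rfl⟩
    exact hb (pairSwap_dble k).symm
  have h₂ : ¬(dblo k = a ∧ dble k = b) := by
    rintro ⟨rfl, rfl⟩
    exact hb (pairSwap_dblo k).symm
  simp only [Matrix.add_apply, Matrix.smul_apply, e, single_apply, h₁, h₂, if_false, smul_zero,
    add_zero]

lemma pairMatrix_apply_dble_dblo (m : Fin n) :
    pairMatrix c d (dble m) (dblo m) = c m := by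
  rw [pairMatrix, Matrix.sum_apply, Finset.sum_eq_single m]
  · simp [e, Fin.ext_iff, dble, dblo]
  · intro k _ hk
    have := Fin.val_ne_of_ne hk
    simp [e, single_apply, Fin.ext_iff, dble, dblo, this]
    omega
  · simp

lemma pairMatrix_apply_dblo_dble (m : Fin n) :
    pairMatrix c d (dblo m) (dble m) = d m := by
  rw [pairMatrix, Matrix.sum_apply, Finset.sum_eq_single m]
  · simp [e, Fin.ext_iff, dble, dblo]
  · intro k _ hk
    have := Fin.val_ne_of_ne hk
    simp [e, single_apply, Fin.ext_iff, dble, dblo, this]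
    omega
  · simp

lemma isQSkewOn_pairMatrix {q : ℂ} (h : ∀ m, c m = -q * d m) :
    IsQSkewOn (pairSwap n) q (pairMatrix c d) where
  apply_eq_zero _ _ := pairMatrix_apply_of_ne c d
  apply_swap a ha := by
    obtain ⟨m, rfl⟩ := exists_dblo_eq_of_lt_pairSwap ha
    rw [pairSwap_dblo, pairMatrix_apply_dble_dblo, pairMatrix_apply_dblo_dble, h]

end PairSwap

end ReflectionEquation

theorem reflection_equation_AII_general (q : ℝ) (hq0 : 0 < q)
    (n : ℕ) (a : Fin (2 * n) → ℝ)
    (haq : ∀ k : Fin n, a (dblo k) = q * a (dble k)) :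
    ReflectionEq (RmatA q (2 * n))
      (∑ k : Fin n,
        ((-(a (dblo k) : ℂ)) • e (dble k) (dblo k) + ((a (dble k) : ℂ)) • e (dblo k) (dble k))) := by
  have hq : (q : ℂ) ≠ 0 := Complex.ofReal_ne_zero.mpr hq0.ne'
  have hJ := ReflectionEquation.isQSkewOn_pairMatrix (q := q) (fun k => -(a (dblo k) : ℂ))
    (fun k => (a (dble k) : ℂ)) fun k => by rw [haq]; push_cast; ring
  rw [ReflectionEquation.RmatA_eq_smul_rMatrix]
  exact (ReflectionEquation.reflectionEq_rMatrix
    (ReflectionEquation.isAdjacentPairing_pairSwap n) hJ hq).smul _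

/-- type AII: the matrix
`J = Σ_{k=1}^{n} ( −a_{2k−1} e_{2k,2k−1} + a_{2k} e_{2k−1,2k} )`, with `a_{2k−1} = q a_{2k}`,
satisfies the reflection equation for the type-A R-matrix of size `N = 2n`. -/
theorem reflection_equation_AII (q : ℝ) (hq0 : 0 < q) (hq1 : q < 1)
    (n : ℕ) (hn : 1 ≤ n) (a : Fin (2 * n) → ℝ) (ha : ∀ k, a k ≠ 0)
    (haq : ∀ k : Fin n, a (dblo k) = q * a (dble k)) :
    ReflectionEq (RmatA q (2 * n))
      (∑ k : Fin n,
        ((-(a (dblo k) : ℂ)) • e (dble k) (dblo k) + ((a (dble k) : ℂ)) • e (dblo k) (dble k))) :=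
  reflection_equation_AII_general q hq0 n a haq
end
end

section
/- Let n ≥ 1, set N = 2n, and let a_1, …, a_{2n} be nonzero real numbers such that the products a_j·a_{j'} are all equal for 1 ≤ j ≤ n (i.e. a_1 a_{1'} = a_2 a_{2'} = … = a_n a_{n'}). Then the diagonal matrix J = Σ_{k=1}^{2n} a_k e_{kk} satisfies the reflection equation R J₁ R^{t₁} J₂ = J₂ R^{t₁} J₁ R with respect to the R-matrix of Sp(2n). (This is the case CI, corresponding to the symmetric space Sp(2n)/U(n), of Theorem 1(1).) -/
open Matrix

noncomputable section

/-- `κ_j` for `Sp(2n)` (0-based index): `κ_j = 1` if `j ≤ n` (1-based), `κ_j = −1` otherwise. -/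
def kappaSp (n : ℕ) (j : Fin (2 * n)) : ℝ := if (j : ℕ) < n then 1 else -1

/-- `ρ_j` for `Sp(2n)` (here `j : Fin (2n)` is the 0-based version of the 1-based index `j+1`):
`ρ_j = n − j + 1` if `j ≤ n` and `ρ_j = n − j` if `j > n`. -/
def rhoSp (n : ℕ) (j : Fin (2 * n)) : ℝ :=
  if (j : ℕ) < n then (n : ℝ) - (j : ℕ) else (n : ℝ) - ((j : ℕ) + 1)

/-- The R-matrix of `Sp(2n)`:
`R = Σ_{i,j} q^{δ_{ij} − δ_{i,j'}} e_{ii} ⊗ e_{jj}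
   + (q − q⁻¹) Σ_{j<i} ( e_{ij} ⊗ e_{ji} − κ_i κ_j q^{ρ_i − ρ_j} e_{ij} ⊗ e_{i',j'} )`,
where `j' = N+1-j` corresponds to `Fin.rev`. -/
def RmatSp (q : ℝ) (n : ℕ) :
    Matrix (Fin (2 * n) × Fin (2 * n)) (Fin (2 * n) × Fin (2 * n)) ℂ :=
  (∑ i : Fin (2 * n), ∑ j : Fin (2 * n),
      ((q ^ ((if i = j then (1 : ℝ) else 0) - (if i = Fin.rev j then (1 : ℝ) else 0)) : ℝ) : ℂ)
        • kron (e i i) (e j j))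
    + ((q : ℂ) - (q : ℂ)⁻¹) •
      ∑ i : Fin (2 * n), ∑ j : Fin (2 * n),
        if (j : ℕ) < (i : ℕ) then
          kron (e i j) (e j i)
            - ((kappaSp n i * kappaSp n j * q ^ (rhoSp n i - rhoSp n j) : ℝ) : ℂ)
                • kron (e i j) (e (Fin.rev i) (Fin.rev j))
        else 0


section Helpers
variable {n : ℕ}

lemma val_rev (x : Fin (2*n)) : ((Fin.rev x : Fin (2*n)) : ℕ) = 2*n - ((x:ℕ)+1) := by
  simp [Fin.val_rev]

lemma rev_ne_self (x : Fin (2*n)) : Fin.rev x ≠ x := by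
  intro h
  have h1 := congrArg Fin.val h
  rw [val_rev] at h1
  have := x.isLt
  omega

lemma rev_eq_comm {x y : Fin (2*n)} : Fin.rev x = y ↔ x = Fin.rev y := by
  constructor
  · rintro rfl; rw [Fin.rev_rev]
  · rintro rfl; rw [Fin.rev_rev]

lemma lt_rev_comm {x y : Fin (2*n)} : (x:ℕ) < ((Fin.rev y : Fin (2*n)) : ℕ) ↔ (y:ℕ) < ((Fin.rev x : Fin (2*n)) : ℕ) := by
  rw [val_rev, val_rev]
  have := x.isLt; have := y.isLt
  omega

lemma kappa_rev (x : Fin (2*n)) : kappaSp n (Fin.rev x) = -kappaSp n x := by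
  unfold kappaSp
  have h := val_rev x
  have := x.isLt
  by_cases hx : (x:ℕ) < n
  · rw [if_pos hx, if_neg (by omega)]
  · rw [if_neg hx, if_pos (by omega)]; ring

lemma rho_rev (x : Fin (2*n)) : rhoSp n (Fin.rev x) = -rhoSp n x := by
  unfold rhoSp
  have h := val_rev x
  have hlt := x.isLt
  by_cases hx : (x:ℕ) < n
  · rw [if_pos hx, if_neg (by omega), h]
    have : ((Fin.rev x : Fin (2*n)) : ℕ) = 2*n - ((x:ℕ)+1) := h
    push_cast [h]
    have h2 : ((2*n - ((x:ℕ)+1) : ℕ) : ℝ) = 2*(n:ℝ) - ((x:ℕ)+1) := by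
      have : (x:ℕ)+1 ≤ 2*n := by omega
      push_cast [Nat.cast_sub this]
      ring
    rw [h2]; ring
  · rw [if_neg hx, if_pos (by omega), h]
    have h2 : ((2*n - ((x:ℕ)+1) : ℕ) : ℝ) = 2*(n:ℝ) - ((x:ℕ)+1) := by
      have : (x:ℕ)+1 ≤ 2*n := by omega
      push_cast [Nat.cast_sub this]
      ring
    rw [h2]; ring
end Helpers


def dd (q : ℝ) (n : ℕ) (i k : Fin (2 * n)) : ℂ :=
  ((q ^ ((if i = k then (1 : ℝ) else 0) - (if i = Fin.rev k then (1 : ℝ) else 0)) : ℝ) : ℂ)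

def sg (q : ℝ) (n : ℕ) (i j : Fin (2 * n)) : ℂ :=
  ((kappaSp n i * kappaSp n j * q ^ (rhoSp n i - rhoSp n j) : ℝ) : ℂ)

lemma Rentry (q : ℝ) (n : ℕ) (i k m s : Fin (2 * n)) :
    RmatSp q n (i, k) (m, s) =
      (if i = m ∧ k = s then dd q n i k else 0)
        + ((q : ℂ) - (q : ℂ)⁻¹) *
          ((if (m : ℕ) < (i : ℕ) ∧ m = k ∧ i = s then 1 else 0)
            - (if (m : ℕ) < (i : ℕ) ∧ Fin.rev i = k ∧ Fin.rev m = s then sg q n i m else 0)) := by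
  classical
  have hstd : ∀ (x y p r : Fin (2*n)) (c : ℂ), Matrix.single x y c p r = if x = p ∧ y = r then c else 0 := fun _ _ _ _ _ => rfl
  simp only [RmatSp, Matrix.add_apply, Matrix.smul_apply, Matrix.sum_apply, kron, e, hstd,
    smul_eq_mul]
  congr 1
  · rw [Finset.sum_eq_single i]
    · rw [Finset.sum_eq_single k]
      · simp only [if_pos (⟨rfl, rfl⟩ : i = i ∧ k = k)]
        by_cases h1 : i = m <;> by_cases h2 : k = s <;> simp [h1, h2, dd]
      · intro b _ hb
        simp only [mul_ite, mul_one, mul_zero, ite_mul, zero_mul]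
        rw [if_neg (fun h => hb h.1)]
      · simp
    · intro b _ hb
      apply Finset.sum_eq_zero
      intro x _
      simp [hb]
    · simp
  · congr 1
    rw [Finset.sum_eq_single i]
    · rw [Finset.sum_eq_single m]
      · by_cases hmi : (m : ℕ) < (i : ℕ)
        · rw [if_pos hmi]
          by_cases h1 : m = k <;> by_cases h2 : i = s <;>
            by_cases h3 : Fin.rev i = k <;> by_cases h4 : Fin.rev m = s <;>
            simp [Matrix.sub_apply, Matrix.smul_apply, kron, hstd, h1, h2, h3, h4, hmi, sg] <;>
            simp_all
        · rw [if_neg hmi, if_neg (fun h => hmi h.1), if_neg (fun h => hmi h.1)]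
          simp
      · intro b _ hb
        by_cases hbi : (b : ℕ) < (i : ℕ)
        · rw [if_pos hbi]
          simp only [Matrix.sub_apply, Matrix.smul_apply, kron, hstd, smul_eq_mul]
          rw [if_neg (fun h => hb h.2)]
          simp
        · rw [if_neg hbi]; simp
      · simp
    · intro b _ hb
      apply Finset.sum_eq_zero
      intro x _
      by_cases hxb : (x : ℕ) < (b : ℕ)
      · rw [if_pos hxb]
        simp only [Matrix.sub_apply, Matrix.smul_apply, kron, hstd, smul_eq_mul]
        rw [if_neg (fun h => hb h.1)]
        simp
      · rw [if_neg hxb]; simp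
    · simp


section Helpers2
variable {n : ℕ} {q : ℝ}

lemma dd_symm (q : ℝ) (n : ℕ) (i k : Fin (2*n)) : dd q n i k = dd q n k i := by
  unfold dd
  have e1 : (if i = k then (1:ℝ) else 0) = (if k = i then (1:ℝ) else 0) :=
    if_congr eq_comm rfl rfl
  have e2 : (if i = Fin.rev k then (1:ℝ) else 0) = (if k = Fin.rev i then (1:ℝ) else 0) :=
    if_congr (eq_comm.trans rev_eq_comm) rfl rfl
  rw [e1, e2]

lemma dd_self (q : ℝ) (n : ℕ) (i : Fin (2*n)) : dd q n i i = (q : ℂ) := by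
  unfold dd
  rw [if_pos rfl, if_neg (fun h => rev_ne_self i h.symm)]
  norm_num

lemma dd_self_rev (q : ℝ) (n : ℕ) (i : Fin (2*n)) : dd q n i (Fin.rev i) = ((q⁻¹ : ℝ) : ℂ) := by
  unfold dd
  rw [if_neg (fun h => rev_ne_self i h.symm), if_pos (by rw [Fin.rev_rev])]
  rw [zero_sub, Real.rpow_neg_one]

lemma dd_rev_symm (q : ℝ) (n : ℕ) (i j : Fin (2*n)) :
    dd q n i (Fin.rev j) = dd q n j (Fin.rev i) := by
  unfold dd
  have e1 : (if i = Fin.rev j then (1:ℝ) else 0) = (if j = Fin.rev i then (1:ℝ) else 0) :=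
    if_congr (eq_comm.trans rev_eq_comm) rfl rfl
  have e2 : (if i = Fin.rev (Fin.rev j) then (1:ℝ) else 0) = (if j = Fin.rev (Fin.rev i) then (1:ℝ) else 0) :=
    if_congr (by rw [Fin.rev_rev, Fin.rev_rev]; exact eq_comm) rfl rfl
  rw [e1, e2]

lemma sg_rev_rev (q : ℝ) (n : ℕ) (i j : Fin (2*n)) :
    sg q n (Fin.rev i) (Fin.rev j) = sg q n j i := by
  unfold sg
  rw [kappa_rev, kappa_rev, rho_rev, rho_rev]
  norm_cast
  rw [show -rhoSp n i - -rhoSp n j = rhoSp n j - rhoSp n i from by ring]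
  ring

lemma prodA (n : ℕ) (a : Fin (2 * n) → ℝ)
    (hprod : ∀ j k : Fin (2 * n), (j : ℕ) < n → (k : ℕ) < n →
      a j * a (Fin.rev j) = a k * a (Fin.rev k)) (i j : Fin (2*n)) :
    a i * a (Fin.rev i) = a j * a (Fin.rev j) := by
  have norm : ∀ x : Fin (2*n), ∃ y : Fin (2*n), (y:ℕ) < n ∧ a x * a (Fin.rev x) = a y * a (Fin.rev y) := by
    intro x
    by_cases hx : (x:ℕ) < n
    · exact ⟨x, hx, rfl⟩
    · refine ⟨Fin.rev x, ?_, ?_⟩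
      · rw [val_rev]; have := x.isLt; omega
      · rw [Fin.rev_rev]; ring
  obtain ⟨y, hy, hxy⟩ := norm i
  obtain ⟨z, hz, hxz⟩ := norm j
  rw [hxy, hxz]; exact hprod y z hy hz

lemma sum2_pin {N : ℕ} (f : Fin N → Fin N → ℂ) (m0 s0 : Fin N)
    (h : ∀ m s, ¬(m = m0 ∧ s = s0) → f m s = 0) :
    (∑ m : Fin N, ∑ s : Fin N, f m s) = f m0 s0 := by
  rw [Fintype.sum_eq_single m0 (fun m hm => Finset.sum_eq_zero (fun s _ => h m s (fun hc => hm hc.1)))]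
  exact Fintype.sum_eq_single s0 (fun s hs => h m0 s (fun hc => hs hc.2))

lemma sum2_zero {N : ℕ} (f : Fin N → Fin N → ℂ) (h : ∀ m s, f m s = 0) :
    (∑ m : Fin N, ∑ s : Fin N, f m s) = 0 := by
  simp [h]

lemma kron_diag_left {N : ℕ} (a : Fin N → ℝ) :
    kron (∑ k : Fin N, ((a k : ℂ)) • e k k) 1 = Matrix.diagonal (fun p : Fin N × Fin N => (a p.1 : ℂ)) := by
  ext p r
  have hstd : ∀ (x y u v : Fin N) (c : ℂ), Matrix.single x y c u v = if x = u ∧ y = v then c else 0 :=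
    fun _ _ _ _ _ => rfl
  simp only [kron, Matrix.sum_apply, Matrix.smul_apply, e, hstd, smul_eq_mul]
  rw [Finset.sum_eq_single p.1]
  · by_cases h1 : p.1 = r.1 <;> by_cases h2 : p.2 = r.2 <;>
      simp [Matrix.diagonal_apply, Matrix.one_apply, h1, h2, Prod.ext_iff]
  · intro b _ hb; simp [hb]
  · simp

lemma kron_diag_right {N : ℕ} (a : Fin N → ℝ) :
    kron 1 (∑ k : Fin N, ((a k : ℂ)) • e k k) = Matrix.diagonal (fun p : Fin N × Fin N => (a p.2 : ℂ)) := by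
  ext p r
  have hstd : ∀ (x y u v : Fin N) (c : ℂ), Matrix.single x y c u v = if x = u ∧ y = v then c else 0 :=
    fun _ _ _ _ _ => rfl
  simp only [kron, Matrix.sum_apply, Matrix.smul_apply, e, hstd, smul_eq_mul]
  rw [Finset.sum_eq_single p.2]
  · by_cases h1 : p.1 = r.1 <;> by_cases h2 : p.2 = r.2 <;>
      simp [Matrix.diagonal_apply, Matrix.one_apply, h1, h2, Prod.ext_iff]
  · intro b _ hb; simp [hb]
  · simp

end Helpers2

lemma entries_eq (q : ℝ) (hq0 : 0 < q) (n : ℕ) (a : Fin (2 * n) → ℝ)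
    (hprod : ∀ j k : Fin (2 * n), (j : ℕ) < n → (k : ℕ) < n →
      a j * a (Fin.rev j) = a k * a (Fin.rev k))
    (i k j l : Fin (2 * n)) :
    (∑ m : Fin (2*n), ∑ s : Fin (2*n),
        (RmatSp q n (i, k) (m, s) * ((a m : ℂ))) * RmatSp q n (j, s) (m, l)) * ((a l : ℂ))
      = ∑ m : Fin (2*n), ∑ s : Fin (2*n),
        (((a k : ℂ)) * RmatSp q n ((m : Fin (2*n)), k) (i, s)) * ((a m : ℂ)) * RmatSp q n (m, s) (j, l) := by
  classical
  have expandL : ∀ m s : Fin (2*n), (RmatSp q n (i, k) (m, s) * ((a m : ℂ))) * RmatSp q n (j, s) (m, l)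
      = ((if i = m ∧ k = s then dd q n i k else 0) * ((a m : ℂ)) * (if j = m ∧ s = l then dd q n j s else 0)) + ((if i = m ∧ k = s then dd q n i k else 0) * ((a m : ℂ)) * (((q : ℂ) - (q : ℂ)⁻¹) * (if (m : ℕ) < (j : ℕ) ∧ m = s ∧ j = l then 1 else 0))) + (-((if i = m ∧ k = s then dd q n i k else 0) * ((a m : ℂ)) * (((q : ℂ) - (q : ℂ)⁻¹) * (if (m : ℕ) < (j : ℕ) ∧ Fin.rev j = s ∧ Fin.rev m = l then sg q n j m else 0)))) + ((((q : ℂ) - (q : ℂ)⁻¹) * (if (m : ℕ) < (i : ℕ) ∧ m = k ∧ i = s then 1 else 0)) * ((a m : ℂ)) * (if j = m ∧ s = l then dd q n j s else 0)) + ((((q : ℂ) - (q : ℂ)⁻¹) * (if (m : ℕ) < (i : ℕ) ∧ m = k ∧ i = s then 1 else 0)) * ((a m : ℂ)) * (((q : ℂ) - (q : ℂ)⁻¹) * (if (m : ℕ) < (j : ℕ) ∧ m = s ∧ j = l then 1 else 0))) + (-((((q : ℂ) - (q : ℂ)⁻¹) * (if (m : ℕ) < (i : ℕ) ∧ m = k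 ∧ i = s then 1 else 0)) * ((a m : ℂ)) * (((q : ℂ) - (q : ℂ)⁻¹) * (if (m : ℕ) < (j : ℕ) ∧ Fin.rev j = s ∧ Fin.rev m = l then sg q n j m else 0)))) + (-((((q : ℂ) - (q : ℂ)⁻¹) * (if (m : ℕ) < (i : ℕ) ∧ Fin.rev i = k ∧ Fin.rev m = s then sg q n i m else 0)) * ((a m : ℂ)) * (if j = m ∧ s = l then dd q n j s else 0))) + (-((((q : ℂ) - (q : ℂ)⁻¹) * (if (m : ℕ) < (i : ℕ) ∧ Fin.rev i = k ∧ Fin.rev m = s then sg q n i m else 0)) * ((a m : ℂ)) * (((q : ℂ) - (q : ℂ)⁻¹) * (if (m : ℕ) < (j : ℕ) ∧ m = s ∧ j = l then 1 else 0)))) + ((((q : ℂ) - (q : ℂ)⁻¹) * (if (m : ℕ) < (i : ℕ) ∧ Fin.rev i = k ∧ Fin.rev m = s then sg q n i m else 0)) * ((a m : ℂ)) * (((q : ℂ) - (q : ℂ)⁻¹) * (if (m : ℕ) < (j : ℕ) ∧ Fin.rev j = s ∧ Fin.rev m = l then sg q n j m else 0))) := by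
    intro m s
    rw [Rentry q n i k m s, Rentry q n j s m l]
    ring
  have expandR : ∀ m s : Fin (2*n), (((a k : ℂ)) * RmatSp q n (m, k) (i, s)) * ((a m : ℂ)) * RmatSp q n (m, s) (j, l)
      = (((((a k : ℂ)) * (if m = i ∧ k = s then dd q n m k else 0)) * ((a m : ℂ))) * (if m = j ∧ s = l then dd q n m s else 0)) + (((((a k : ℂ)) * (if m = i ∧ k = s then dd q n m k else 0)) * ((a m : ℂ))) * (((q : ℂ) - (q : ℂ)⁻¹) * (if (j : ℕ) < (m : ℕ) ∧ j = s ∧ m = l then 1 else 0))) + (-(((((a k : ℂ)) * (if m = i ∧ k = s then dd q n m k else 0)) * ((a m : ℂ))) * (((q : ℂ) - (q : ℂ)⁻¹) * (if (j : ℕ) < (m : ℕ) ∧ Fin.rev m = s ∧ Fin.rev j = l then sg q n m j else 0)))) + (((((a k : ℂ)) * (((q : ℂ) - (q : ℂ)⁻¹) * (if (i : ℕ) < (m : ℕ) ∧ i = k ∧ m = s then 1 else 0))) * ((a m : ℂ))) * (if m = j ∧ s = l then dd q n m s else 0)) + (((((a k : ℂ)) * (((q : ℂ) - (q : ℂ)⁻¹)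 * (if (i : ℕ) < (m : ℕ) ∧ i = k ∧ m = s then 1 else 0))) * ((a m : ℂ))) * (((q : ℂ) - (q : ℂ)⁻¹) * (if (j : ℕ) < (m : ℕ) ∧ j = s ∧ m = l then 1 else 0))) + (-(((((a k : ℂ)) * (((q : ℂ) - (q : ℂ)⁻¹) * (if (i : ℕ) < (m : ℕ) ∧ i = k ∧ m = s then 1 else 0))) * ((a m : ℂ))) * (((q : ℂ) - (q : ℂ)⁻¹) * (if (j : ℕ) < (m : ℕ) ∧ Fin.rev m = s ∧ Fin.rev j = l then sg q n m j else 0)))) + (-(((((a k : ℂ)) * (((q : ℂ) - (q : ℂ)⁻¹) * (if (i : ℕ) < (m : ℕ) ∧ Fin.rev m = k ∧ Fin.rev i = s then sg q n m i else 0))) * ((a m : ℂ))) * (if m = j ∧ s = l then dd q n m s else 0))) + (-(((((a k : ℂ)) * (((q : ℂ) - (q : ℂ)⁻¹) * (if (i : ℕ) < (m : ℕ) ∧ Fin.rev m = k ∧ Fin.rev i = s then sg q n m i else 0))) * ((a m : ℂ))) * (((q : ℂ) - (q : ℂ)⁻¹) * (if (j : ℕ) < (m : ℕ) ∧ j = s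 ∧ m = l then 1 else 0)))) + (((((a k : ℂ)) * (((q : ℂ) - (q : ℂ)⁻¹) * (if (i : ℕ) < (m : ℕ) ∧ Fin.rev m = k ∧ Fin.rev i = s then sg q n m i else 0))) * ((a m : ℂ))) * (((q : ℂ) - (q : ℂ)⁻¹) * (if (j : ℕ) < (m : ℕ) ∧ Fin.rev m = s ∧ Fin.rev j = l then sg q n m j else 0))) := by
    intro m s
    rw [Rentry q n m k i s, Rentry q n m s j l]
    ring
  simp only [expandL, expandR]
  simp only [Finset.sum_add_distrib]
  have hp1 : (∑ m : Fin (2*n), ∑ s : Fin (2*n), ((if i = m ∧ k = s then dd q n i k else 0) * ((a m : ℂ)) * (if j = m ∧ s = l then dd q n j s else 0))) = ((if i = i ∧ k = k then dd q n i k else 0) * ((a i : ℂ)) * (if j = i ∧ k = l then dd q n j k else 0)) :=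
    sum2_pin (fun m s => ((if i = m ∧ k = s then dd q n i k else 0) * ((a m : ℂ)) * (if j = m ∧ s = l then dd q n j s else 0))) i k (by
      intro m s hms
      rw [if_neg (show ¬(i = m ∧ k = s) from fun hc => hms ⟨hc.1.symm, hc.2.symm⟩)]
      ring)
  have hp2 : (∑ m : Fin (2*n), ∑ s : Fin (2*n), ((if i = m ∧ k = s then dd q n i k else 0) * ((a m : ℂ)) * (((q : ℂ) - (q : ℂ)⁻¹) * (if (m : ℕ) < (j : ℕ) ∧ m = s ∧ j = l then 1 else 0)))) = ((if i = i ∧ k = k then dd q n i k else 0) * ((a i : ℂ)) * (((q : ℂ) - (q : ℂ)⁻¹) * (if (i : ℕ) < (j : ℕ) ∧ i = k ∧ j = l then 1 else 0))) :=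
    sum2_pin (fun m s => ((if i = m ∧ k = s then dd q n i k else 0) * ((a m : ℂ)) * (((q : ℂ) - (q : ℂ)⁻¹) * (if (m : ℕ) < (j : ℕ) ∧ m = s ∧ j = l then 1 else 0)))) i k (by
      intro m s hms
      rw [if_neg (show ¬(i = m ∧ k = s) from fun hc => hms ⟨hc.1.symm, hc.2.symm⟩)]
      ring)
  have hp3 : (∑ m : Fin (2*n), ∑ s : Fin (2*n), (-((if i = m ∧ k = s then dd q n i k else 0) * ((a m : ℂ)) * (((q : ℂ) - (q : ℂ)⁻¹) * (if (m : ℕ) < (j : ℕ) ∧ Fin.rev j = s ∧ Fin.rev m = l then sg q n j m else 0))))) = (-((if i = i ∧ k = k then dd q n i k else 0) * ((a i : ℂ)) * (((q : ℂ) - (q : ℂ)⁻¹) * (if (i : ℕ) < (j : ℕ) ∧ Fin.rev j = k ∧ Fin.rev i = l then sg q n j i else 0)))) :=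
    sum2_pin (fun m s => (-((if i = m ∧ k = s then dd q n i k else 0) * ((a m : ℂ)) * (((q : ℂ) - (q : ℂ)⁻¹) * (if (m : ℕ) < (j : ℕ) ∧ Fin.rev j = s ∧ Fin.rev m = l then sg q n j m else 0))))) i k (by
      intro m s hms
      rw [if_neg (show ¬(i = m ∧ k = s) from fun hc => hms ⟨hc.1.symm, hc.2.symm⟩)]
      ring)
  have hp4 : (∑ m : Fin (2*n), ∑ s : Fin (2*n), ((((q : ℂ) - (q : ℂ)⁻¹) * (if (m : ℕ) < (i : ℕ) ∧ m = k ∧ i = s then 1 else 0)) * ((a m : ℂ)) * (if j = m ∧ s = l then dd q n j s else 0))) = ((((q : ℂ) - (q : ℂ)⁻¹) * (if (j : ℕ) < (i : ℕ) ∧ j = k ∧ i = l then 1 else 0)) * ((a j : ℂ)) * (if j = j ∧ l = l then dd q n j l else 0)) :=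
    sum2_pin (fun m s => ((((q : ℂ) - (q : ℂ)⁻¹) * (if (m : ℕ) < (i : ℕ) ∧ m = k ∧ i = s then 1 else 0)) * ((a m : ℂ)) * (if j = m ∧ s = l then dd q n j s else 0))) j l (by
      intro m s hms
      rw [if_neg (show ¬(j = m ∧ s = l) from fun hc => hms ⟨hc.1.symm, hc.2⟩)]
      ring)
  have hp5 : (∑ m : Fin (2*n), ∑ s : Fin (2*n), ((((q : ℂ) - (q : ℂ)⁻¹) * (if (m : ℕ) < (i : ℕ) ∧ m = k ∧ i = s then 1 else 0)) * ((a m : ℂ)) * (((q : ℂ) - (q : ℂ)⁻¹) * (if (m : ℕ) < (j : ℕ) ∧ m = s ∧ j = l then 1 else 0)))) = 0 :=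
    sum2_zero (fun m s => ((((q : ℂ) - (q : ℂ)⁻¹) * (if (m : ℕ) < (i : ℕ) ∧ m = k ∧ i = s then 1 else 0)) * ((a m : ℂ)) * (((q : ℂ) - (q : ℂ)⁻¹) * (if (m : ℕ) < (j : ℕ) ∧ m = s ∧ j = l then 1 else 0)))) (by
      intro m s
      by_cases h1 : (m : ℕ) < (i : ℕ) ∧ m = k ∧ i = s
      · by_cases h2 : (m : ℕ) < (j : ℕ) ∧ m = s ∧ j = l
        · exfalso
          have hms : m = i := h2.2.1.trans h1.2.2.symm
          have := congrArg Fin.val hms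
          omega
        · rw [if_neg h2]; ring
      · rw [if_neg h1]; ring)
  have hp6 : (∑ m : Fin (2*n), ∑ s : Fin (2*n), (-((((q : ℂ) - (q : ℂ)⁻¹) * (if (m : ℕ) < (i : ℕ) ∧ m = k ∧ i = s then 1 else 0)) * ((a m : ℂ)) * (((q : ℂ) - (q : ℂ)⁻¹) * (if (m : ℕ) < (j : ℕ) ∧ Fin.rev j = s ∧ Fin.rev m = l then sg q n j m else 0))))) = (-((((q : ℂ) - (q : ℂ)⁻¹) * (if (k : ℕ) < (i : ℕ) ∧ k = k ∧ i = i then 1 else 0)) * ((a k : ℂ)) * (((q : ℂ) - (q : ℂ)⁻¹) * (if (k : ℕ) < (j : ℕ) ∧ Fin.rev j = i ∧ Fin.rev k = l then sg q n j k else 0)))) :=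
    sum2_pin (fun m s => (-((((q : ℂ) - (q : ℂ)⁻¹) * (if (m : ℕ) < (i : ℕ) ∧ m = k ∧ i = s then 1 else 0)) * ((a m : ℂ)) * (((q : ℂ) - (q : ℂ)⁻¹) * (if (m : ℕ) < (j : ℕ) ∧ Fin.rev j = s ∧ Fin.rev m = l then sg q n j m else 0))))) k i (by
      intro m s hms
      rw [if_neg (show ¬((m : ℕ) < (i : ℕ) ∧ m = k ∧ i = s) from fun hc => hms ⟨hc.2.1, hc.2.2.symm⟩)]
      ring)
  have hp7 : (∑ m : Fin (2*n), ∑ s : Fin (2*n), (-((((q : ℂ) - (q : ℂ)⁻¹) * (if (m : ℕ) < (i : ℕ) ∧ Fin.rev i = k ∧ Fin.rev m = s then sg q n i m else 0)) * ((a m : ℂ)) * (if j = m ∧ s = l then dd q n j s else 0)))) = (-((((q : ℂ) - (q : ℂ)⁻¹) * (if (j : ℕ) < (i : ℕ) ∧ Fin.rev i = k ∧ Fin.rev j = l then sg q n i j else 0)) * ((a j : ℂ)) * (if j = j ∧ l = l then dd q n j l else 0))) :=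
    sum2_pin (fun m s => (-((((q : ℂ) - (q : ℂ)⁻¹) * (if (m : ℕ) < (i : ℕ) ∧ Fin.rev i = k ∧ Fin.rev m = s then sg q n i m else 0)) * ((a m : ℂ)) * (if j = m ∧ s = l then dd q n j s else 0)))) j l (by
      intro m s hms
      rw [if_neg (show ¬(j = m ∧ s = l) from fun hc => hms ⟨hc.1.symm, hc.2⟩)]
      ring)
  have hp8 : (∑ m : Fin (2*n), ∑ s : Fin (2*n), (-((((q : ℂ) - (q : ℂ)⁻¹) * (if (m : ℕ) < (i : ℕ) ∧ Fin.rev i = k ∧ Fin.rev m = s then sg q n i m else 0)) * ((a m : ℂ)) * (((q : ℂ) - (q : ℂ)⁻¹) * (if (m : ℕ) < (j : ℕ) ∧ m = s ∧ j = l then 1 else 0))))) = 0 :=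
    sum2_zero (fun m s => (-((((q : ℂ) - (q : ℂ)⁻¹) * (if (m : ℕ) < (i : ℕ) ∧ Fin.rev i = k ∧ Fin.rev m = s then sg q n i m else 0)) * ((a m : ℂ)) * (((q : ℂ) - (q : ℂ)⁻¹) * (if (m : ℕ) < (j : ℕ) ∧ m = s ∧ j = l then 1 else 0))))) (by
      intro m s
      by_cases h1 : (m : ℕ) < (i : ℕ) ∧ Fin.rev i = k ∧ Fin.rev m = s
      · by_cases h2 : (m : ℕ) < (j : ℕ) ∧ m = s ∧ j = l
        · exact absurd (h1.2.2.trans h2.2.1.symm) (rev_ne_self m)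
        · rw [if_neg h2]; ring
      · rw [if_neg h1]; ring)
  have hp9 : (∑ m : Fin (2*n), ∑ s : Fin (2*n), ((((q : ℂ) - (q : ℂ)⁻¹) * (if (m : ℕ) < (i : ℕ) ∧ Fin.rev i = k ∧ Fin.rev m = s then sg q n i m else 0)) * ((a m : ℂ)) * (((q : ℂ) - (q : ℂ)⁻¹) * (if (m : ℕ) < (j : ℕ) ∧ Fin.rev j = s ∧ Fin.rev m = l then sg q n j m else 0)))) = 0 :=
    sum2_zero (fun m s => ((((q : ℂ) - (q : ℂ)⁻¹) * (if (m : ℕ) < (i : ℕ) ∧ Fin.rev i = k ∧ Fin.rev m = s then sg q n i m else 0)) * ((a m : ℂ)) * (((q : ℂ) - (q : ℂ)⁻¹) * (if (m : ℕ) < (j : ℕ) ∧ Fin.rev j = s ∧ Fin.rev m = l then sg q n j m else 0)))) (by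
      intro m s
      by_cases h1 : (m : ℕ) < (i : ℕ) ∧ Fin.rev i = k ∧ Fin.rev m = s
      · by_cases h2 : (m : ℕ) < (j : ℕ) ∧ Fin.rev j = s ∧ Fin.rev m = l
        · exfalso
          have hmj : m = j := Fin.rev_injective (h1.2.2.trans h2.2.1.symm)
          have := congrArg Fin.val hmj
          omega
        · rw [if_neg h2]; ring
      · rw [if_neg h1]; ring)
  have hr1 : (∑ m : Fin (2*n), ∑ s : Fin (2*n), (((((a k : ℂ)) * (if m = i ∧ k = s then dd q n m k else 0)) * ((a m : ℂ))) * (if m = j ∧ s = l then dd q n m s else 0))) = (((((a k : ℂ)) * (if i = i ∧ k = k then dd q n i k else 0)) * ((a i : ℂ))) * (if i = j ∧ k = l then dd q n i k else 0)) :=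
    sum2_pin (fun m s => (((((a k : ℂ)) * (if m = i ∧ k = s then dd q n m k else 0)) * ((a m : ℂ))) * (if m = j ∧ s = l then dd q n m s else 0))) i k (by
      intro m s hms
      rw [if_neg (show ¬(m = i ∧ k = s) from fun hc => hms ⟨hc.1, hc.2.symm⟩)]
      ring)
  have hr2 : (∑ m : Fin (2*n), ∑ s : Fin (2*n), (((((a k : ℂ)) * (if m = i ∧ k = s then dd q n m k else 0)) * ((a m : ℂ))) * (((q : ℂ) - (q : ℂ)⁻¹) * (if (j : ℕ) < (m : ℕ) ∧ j = s ∧ m = l then 1 else 0)))) = (((((a k : ℂ)) * (if i = i ∧ k = k then dd q n i k else 0)) * ((a i : ℂ))) * (((q : ℂ) - (q : ℂ)⁻¹) * (if (j : ℕ) < (i : ℕ) ∧ j = k ∧ i = l then 1 else 0))) :=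
    sum2_pin (fun m s => (((((a k : ℂ)) * (if m = i ∧ k = s then dd q n m k else 0)) * ((a m : ℂ))) * (((q : ℂ) - (q : ℂ)⁻¹) * (if (j : ℕ) < (m : ℕ) ∧ j = s ∧ m = l then 1 else 0)))) i k (by
      intro m s hms
      rw [if_neg (show ¬(m = i ∧ k = s) from fun hc => hms ⟨hc.1, hc.2.symm⟩)]
      ring)
  have hr3 : (∑ m : Fin (2*n), ∑ s : Fin (2*n), (-(((((a k : ℂ)) * (if m = i ∧ k = s then dd q n m k else 0)) * ((a m : ℂ))) * (((q : ℂ) - (q : ℂ)⁻¹) * (if (j : ℕ) < (m : ℕ) ∧ Fin.rev m = s ∧ Fin.rev j = l then sg q n m j else 0))))) = (-(((((a k : ℂ)) * (if i = i ∧ k = k then dd q n i k else 0)) * ((a i : ℂ))) * (((q : ℂ) - (q : ℂ)⁻¹) * (if (j : ℕ) < (i : ℕ) ∧ Fin.rev i = k ∧ Fin.rev j = l then sg q n i j else 0)))) :=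
    sum2_pin (fun m s => (-(((((a k : ℂ)) * (if m = i ∧ k = s then dd q n m k else 0)) * ((a m : ℂ))) * (((q : ℂ) - (q : ℂ)⁻¹) * (if (j : ℕ) < (m : ℕ) ∧ Fin.rev m = s ∧ Fin.rev j = l then sg q n m j else 0))))) i k (by
      intro m s hms
      rw [if_neg (show ¬(m = i ∧ k = s) from fun hc => hms ⟨hc.1, hc.2.symm⟩)]
      ring)
  have hr4 : (∑ m : Fin (2*n), ∑ s : Fin (2*n), (((((a k : ℂ)) * (((q : ℂ) - (q : ℂ)⁻¹) * (if (i : ℕ) < (m : ℕ) ∧ i = k ∧ m = s then 1 else 0))) * ((a m : ℂ))) * (if m = j ∧ s = l then dd q n m s else 0))) = (((((a k : ℂ)) * (((q : ℂ) - (q : ℂ)⁻¹) * (if (i : ℕ) < (j : ℕ) ∧ i = k ∧ j = l then 1 else 0))) * ((a j : ℂ))) * (if j = j ∧ l = l then dd q n j l else 0)) :=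
    sum2_pin (fun m s => (((((a k : ℂ)) * (((q : ℂ) - (q : ℂ)⁻¹) * (if (i : ℕ) < (m : ℕ) ∧ i = k ∧ m = s then 1 else 0))) * ((a m : ℂ))) * (if m = j ∧ s = l then dd q n m s else 0))) j l (by
      intro m s hms
      rw [if_neg (show ¬(m = j ∧ s = l) from hms)]
      ring)
  have hr5 : (∑ m : Fin (2*n), ∑ s : Fin (2*n), (((((a k : ℂ)) * (((q : ℂ) - (q : ℂ)⁻¹) * (if (i : ℕ) < (m : ℕ) ∧ i = k ∧ m = s then 1 else 0))) * ((a m : ℂ))) * (((q : ℂ) - (q : ℂ)⁻¹) * (if (j : ℕ) < (m : ℕ) ∧ j = s ∧ m = l then 1 else 0)))) = 0 :=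
    sum2_zero (fun m s => (((((a k : ℂ)) * (((q : ℂ) - (q : ℂ)⁻¹) * (if (i : ℕ) < (m : ℕ) ∧ i = k ∧ m = s then 1 else 0))) * ((a m : ℂ))) * (((q : ℂ) - (q : ℂ)⁻¹) * (if (j : ℕ) < (m : ℕ) ∧ j = s ∧ m = l then 1 else 0)))) (by
      intro m s
      by_cases h1 : (i : ℕ) < (m : ℕ) ∧ i = k ∧ m = s
      · by_cases h2 : (j : ℕ) < (m : ℕ) ∧ j = s ∧ m = l
        · exfalso
          have hmj : m = j := h1.2.2.trans h2.2.1.symm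
          have := congrArg Fin.val hmj
          omega
        · rw [if_neg h2]; ring
      · rw [if_neg h1]; ring)
  have hr6 : (∑ m : Fin (2*n), ∑ s : Fin (2*n), (-(((((a k : ℂ)) * (((q : ℂ) - (q : ℂ)⁻¹) * (if (i : ℕ) < (m : ℕ) ∧ i = k ∧ m = s then 1 else 0))) * ((a m : ℂ))) * (((q : ℂ) - (q : ℂ)⁻¹) * (if (j : ℕ) < (m : ℕ) ∧ Fin.rev m = s ∧ Fin.rev j = l then sg q n m j else 0))))) = 0 :=
    sum2_zero (fun m s => (-(((((a k : ℂ)) * (((q : ℂ) - (q : ℂ)⁻¹) * (if (i : ℕ) < (m : ℕ) ∧ i = k ∧ m = s then 1 else 0))) * ((a m : ℂ))) * (((q : ℂ) - (q : ℂ)⁻¹) * (if (j : ℕ) < (m : ℕ) ∧ Fin.rev m = s ∧ Fin.rev j = l then sg q n m j else 0))))) (by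
      intro m s
      by_cases h1 : (i : ℕ) < (m : ℕ) ∧ i = k ∧ m = s
      · by_cases h2 : (j : ℕ) < (m : ℕ) ∧ Fin.rev m = s ∧ Fin.rev j = l
        · exact absurd (h2.2.1.trans h1.2.2.symm) (rev_ne_self m)
        · rw [if_neg h2]; ring
      · rw [if_neg h1]; ring)
  have hr7 : (∑ m : Fin (2*n), ∑ s : Fin (2*n), (-(((((a k : ℂ)) * (((q : ℂ) - (q : ℂ)⁻¹) * (if (i : ℕ) < (m : ℕ) ∧ Fin.rev m = k ∧ Fin.rev i = s then sg q n m i else 0))) * ((a m : ℂ))) * (if m = j ∧ s = l then dd q n m s else 0)))) = (-(((((a k : ℂ)) * (((q : ℂ) - (q : ℂ)⁻¹) * (if (i : ℕ) < (j : ℕ) ∧ Fin.rev j = k ∧ Fin.rev i = l then sg q n j i else 0))) * ((a j : ℂ))) * (if j = j ∧ l = l then dd q n j l else 0))) :=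
    sum2_pin (fun m s => (-(((((a k : ℂ)) * (((q : ℂ) - (q : ℂ)⁻¹) * (if (i : ℕ) < (m : ℕ) ∧ Fin.rev m = k ∧ Fin.rev i = s then sg q n m i else 0))) * ((a m : ℂ))) * (if m = j ∧ s = l then dd q n m s else 0)))) j l (by
      intro m s hms
      rw [if_neg (show ¬(m = j ∧ s = l) from hms)]
      ring)
  have hr8 : (∑ m : Fin (2*n), ∑ s : Fin (2*n), (-(((((a k : ℂ)) * (((q : ℂ) - (q : ℂ)⁻¹) * (if (i : ℕ) < (m : ℕ) ∧ Fin.rev m = k ∧ Fin.rev i = s then sg q n m i else 0))) * ((a m : ℂ))) * (((q : ℂ) - (q : ℂ)⁻¹) * (if (j : ℕ) < (m : ℕ) ∧ j = s ∧ m = l then 1 else 0))))) = (-(((((a k : ℂ)) * (((q : ℂ) - (q : ℂ)⁻¹) * (if (i : ℕ) < ((Fin.rev k) : ℕ) ∧ Fin.rev (Fin.rev k) = k ∧ Fin.rev i = (Fin.rev i) then sg q n (Fin.rev k) i else 0))) * ((a (Fin.rev k) : ℂ))) * (((q : ℂ) - (q : ℂ)⁻¹) * (if (j : ℕ) < ((Fin.rev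 k) : ℕ) ∧ j = (Fin.rev i) ∧ (Fin.rev k) = l then 1 else 0)))) :=
    sum2_pin (fun m s => (-(((((a k : ℂ)) * (((q : ℂ) - (q : ℂ)⁻¹) * (if (i : ℕ) < (m : ℕ) ∧ Fin.rev m = k ∧ Fin.rev i = s then sg q n m i else 0))) * ((a m : ℂ))) * (((q : ℂ) - (q : ℂ)⁻¹) * (if (j : ℕ) < (m : ℕ) ∧ j = s ∧ m = l then 1 else 0))))) (Fin.rev k) (Fin.rev i) (by
      intro m s hms
      rw [if_neg (show ¬((i : ℕ) < (m : ℕ) ∧ Fin.rev m = k ∧ Fin.rev i = s) from fun hc => hms ⟨rev_eq_comm.mp hc.2.1, hc.2.2.symm⟩)]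
      ring)
  have hr9 : (∑ m : Fin (2*n), ∑ s : Fin (2*n), (((((a k : ℂ)) * (((q : ℂ) - (q : ℂ)⁻¹) * (if (i : ℕ) < (m : ℕ) ∧ Fin.rev m = k ∧ Fin.rev i = s then sg q n m i else 0))) * ((a m : ℂ))) * (((q : ℂ) - (q : ℂ)⁻¹) * (if (j : ℕ) < (m : ℕ) ∧ Fin.rev m = s ∧ Fin.rev j = l then sg q n m j else 0)))) = 0 :=
    sum2_zero (fun m s => (((((a k : ℂ)) * (((q : ℂ) - (q : ℂ)⁻¹) * (if (i : ℕ) < (m : ℕ) ∧ Fin.rev m = k ∧ Fin.rev i = s then sg q n m i else 0))) * ((a m : ℂ))) * (((q : ℂ) - (q : ℂ)⁻¹) * (if (j : ℕ) < (m : ℕ) ∧ Fin.rev m = s ∧ Fin.rev j = l then sg q n m j else 0)))) (by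
      intro m s
      by_cases h1 : (i : ℕ) < (m : ℕ) ∧ Fin.rev m = k ∧ Fin.rev i = s
      · by_cases h2 : (j : ℕ) < (m : ℕ) ∧ Fin.rev m = s ∧ Fin.rev j = l
        · exfalso
          have him : i = m := Fin.rev_injective (h1.2.2.trans h2.2.1.symm)
          have := congrArg Fin.val him
          omega
        · rw [if_neg h2]; ring
      · rw [if_neg h1]; ring)
  rw [hp1, hp2, hp3, hp4, hp5, hp6, hp7, hp8, hp9, hr1, hr2, hr3, hr4, hr5, hr6, hr7, hr8, hr9]
  have hP : ((a i : ℂ)) * ((a (Fin.rev i) : ℂ)) = ((a j : ℂ)) * ((a (Fin.rev j) : ℂ)) := by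
    exact_mod_cast congrArg Complex.ofReal (prodA n a hprod i j)
  have e1 : ((if i = i ∧ k = k then dd q n i k else 0) * ((a i : ℂ)) * (if j = i ∧ k = l then dd q n j k else 0)) * ((a l : ℂ))
      = ((((a k : ℂ)) * (if i = i ∧ k = k then dd q n i k else 0)) * ((a i : ℂ))) * (if i = j ∧ k = l then dd q n i k else 0) := by
    rw [if_pos (⟨rfl, rfl⟩ : i = i ∧ k = k)]
    by_cases h : j = i ∧ k = l
    · rw [if_pos h, if_pos (⟨h.1.symm, h.2⟩ : i = j ∧ k = l), h.1, ← h.2]; ring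
    · rw [if_neg h, if_neg (show ¬(i = j ∧ k = l) from fun hc => h ⟨hc.1.symm, hc.2⟩)]; ring
  have e2 : ((if i = i ∧ k = k then dd q n i k else 0) * ((a i : ℂ)) * (((q : ℂ) - (q : ℂ)⁻¹) * (if (i : ℕ) < (j : ℕ) ∧ i = k ∧ j = l then 1 else 0))) * ((a l : ℂ))
      = ((((a k : ℂ)) * (((q : ℂ) - (q : ℂ)⁻¹) * (if (i : ℕ) < (j : ℕ) ∧ i = k ∧ j = l then 1 else 0))) * ((a j : ℂ))) * (if j = j ∧ l = l then dd q n j l else 0) := by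
    rw [if_pos (⟨rfl, rfl⟩ : i = i ∧ k = k), if_pos (⟨rfl, rfl⟩ : j = j ∧ l = l)]
    by_cases h : (i : ℕ) < (j : ℕ) ∧ i = k ∧ j = l
    · rw [if_pos h, ← h.2.1, ← h.2.2, dd_self q n i, dd_self q n j]; ring
    · rw [if_neg h]; ring
  have e3 : (-((if i = i ∧ k = k then dd q n i k else 0) * ((a i : ℂ)) * (((q : ℂ) - (q : ℂ)⁻¹) * (if (i : ℕ) < (j : ℕ) ∧ Fin.rev j = k ∧ Fin.rev i = l then sg q n j i else 0)))) * ((a l : ℂ))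
      = -(((((a k : ℂ)) * (((q : ℂ) - (q : ℂ)⁻¹) * (if (i : ℕ) < (j : ℕ) ∧ Fin.rev j = k ∧ Fin.rev i = l then sg q n j i else 0))) * ((a j : ℂ))) * (if j = j ∧ l = l then dd q n j l else 0)) := by
    rw [if_pos (⟨rfl, rfl⟩ : i = i ∧ k = k), if_pos (⟨rfl, rfl⟩ : j = j ∧ l = l)]
    by_cases h : (i : ℕ) < (j : ℕ) ∧ Fin.rev j = k ∧ Fin.rev i = l
    · rw [if_pos h, ← h.2.1, ← h.2.2, dd_rev_symm q n i j]
      linear_combination (-(dd q n j (Fin.rev i) * ((q : ℂ) - (q : ℂ)⁻¹) * sg q n j i)) * hP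
    · rw [if_neg h]; ring
  have e4 : ((((q : ℂ) - (q : ℂ)⁻¹) * (if (j : ℕ) < (i : ℕ) ∧ j = k ∧ i = l then 1 else 0)) * ((a j : ℂ)) * (if j = j ∧ l = l then dd q n j l else 0)) * ((a l : ℂ))
      = ((((a k : ℂ)) * (if i = i ∧ k = k then dd q n i k else 0)) * ((a i : ℂ))) * (((q : ℂ) - (q : ℂ)⁻¹) * (if (j : ℕ) < (i : ℕ) ∧ j = k ∧ i = l then 1 else 0)) := by
    rw [if_pos (⟨rfl, rfl⟩ : i = i ∧ k = k), if_pos (⟨rfl, rfl⟩ : j = j ∧ l = l)]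
    by_cases h : (j : ℕ) < (i : ℕ) ∧ j = k ∧ i = l
    · rw [if_pos h, ← h.2.1, ← h.2.2, dd_symm q n j i]; ring
    · rw [if_neg h]; ring
  have e5 : (-((((q : ℂ) - (q : ℂ)⁻¹) * (if (k : ℕ) < (i : ℕ) ∧ k = k ∧ i = i then 1 else 0)) * ((a k : ℂ)) * (((q : ℂ) - (q : ℂ)⁻¹) * (if (k : ℕ) < (j : ℕ) ∧ Fin.rev j = i ∧ Fin.rev k = l then sg q n j k else 0)))) * ((a l : ℂ))
      = -(((((a k : ℂ)) * (((q : ℂ) - (q : ℂ)⁻¹) * (if (i : ℕ) < ((Fin.rev k) : ℕ) ∧ Fin.rev (Fin.rev k) = k ∧ Fin.rev i = Fin.rev i then sg q n (Fin.rev k) i else 0))) * ((a (Fin.rev k) : ℂ))) * (((q : ℂ) - (q : ℂ)⁻¹) * (if (j : ℕ) < ((Fin.rev k) : ℕ) ∧ j = Fin.rev i ∧ Fin.rev k = l then 1 else 0))) := by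
    have hv := val_rev (n := n) k
    have hvi := val_rev (n := n) i
    have hvj := val_rev (n := n) j
    have hik := i.isLt
    have hjk := j.isLt
    have hkk := k.isLt
    by_cases h : (k : ℕ) < (i : ℕ) ∧ (k : ℕ) < (j : ℕ) ∧ Fin.rev j = i ∧ Fin.rev k = l
    · obtain ⟨h1, h2, h3, h4⟩ := h
      have hvj2 := congrArg Fin.val h3
      have hA : (i : ℕ) < ((Fin.rev k) : ℕ) := by omega
      have hB : (j : ℕ) < ((Fin.rev k) : ℕ) := by omega
      have hC : j = Fin.rev i := by rw [← h3, Fin.rev_rev]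
      rw [if_pos (⟨h1, rfl, rfl⟩ : (k : ℕ) < (i : ℕ) ∧ k = k ∧ i = i),
        if_pos (⟨h2, h3, h4⟩ : (k : ℕ) < (j : ℕ) ∧ Fin.rev j = i ∧ Fin.rev k = l),
        if_pos (⟨hA, Fin.rev_rev k, rfl⟩ : (i : ℕ) < ((Fin.rev k) : ℕ) ∧ Fin.rev (Fin.rev k) = k ∧ Fin.rev i = Fin.rev i),
        if_pos (⟨hB, hC, h4⟩ : (j : ℕ) < ((Fin.rev k) : ℕ) ∧ j = Fin.rev i ∧ Fin.rev k = l),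
        ← h4, ← h3, sg_rev_rev q n k j]
      ring
    · have hL : ¬((k : ℕ) < (i : ℕ) ∧ k = k ∧ i = i) ∨ ¬((k : ℕ) < (j : ℕ) ∧ Fin.rev j = i ∧ Fin.rev k = l) := by
        by_cases hx : (k : ℕ) < (i : ℕ) ∧ k = k ∧ i = i
        · exact Or.inr (fun hy => h ⟨hx.1, hy.1, hy.2.1, hy.2.2⟩)
        · exact Or.inl hx
      have hR : ¬((i : ℕ) < ((Fin.rev k) : ℕ) ∧ Fin.rev (Fin.rev k) = k ∧ Fin.rev i = Fin.rev i) ∨ ¬((j : ℕ) < ((Fin.rev k) : ℕ) ∧ j = Fin.rev i ∧ Fin.rev k = l) := by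
        by_cases hx : (i : ℕ) < ((Fin.rev k) : ℕ) ∧ Fin.rev (Fin.rev k) = k ∧ Fin.rev i = Fin.rev i
        · refine Or.inr (fun hy => h ?_)
          have hvj2 := congrArg Fin.val hy.2.1
          refine ⟨by omega, by omega, ?_, hy.2.2⟩
          rw [hy.2.1, Fin.rev_rev]
        · exact Or.inl hx
      rcases hL with hx | hx <;> rcases hR with hy | hy <;> rw [if_neg hx, if_neg hy] <;> ring
  have e6 : (-((((q : ℂ) - (q : ℂ)⁻¹) * (if (j : ℕ) < (i : ℕ) ∧ Fin.rev i = k ∧ Fin.rev j = l then sg q n i j else 0)) * ((a j : ℂ)) * (if j = j ∧ l = l then dd q n j l else 0))) * ((a l : ℂ))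
      = -(((((a k : ℂ)) * (if i = i ∧ k = k then dd q n i k else 0)) * ((a i : ℂ))) * (((q : ℂ) - (q : ℂ)⁻¹) * (if (j : ℕ) < (i : ℕ) ∧ Fin.rev i = k ∧ Fin.rev j = l then sg q n i j else 0))) := by
    rw [if_pos (⟨rfl, rfl⟩ : i = i ∧ k = k), if_pos (⟨rfl, rfl⟩ : j = j ∧ l = l)]
    by_cases h : (j : ℕ) < (i : ℕ) ∧ Fin.rev i = k ∧ Fin.rev j = l
    · rw [if_pos h, ← h.2.1, ← h.2.2, dd_self_rev q n j, dd_self_rev q n i]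
      linear_combination (((q : ℂ) - (q : ℂ)⁻¹) * sg q n i j * ((q⁻¹ : ℝ) : ℂ)) * hP
    · rw [if_neg h]; ring
  linear_combination e1 + e2 + e3 + e4 + e5 + e6

lemma entry_LHS {I : Type*} [Fintype I] [DecidableEq I] (R S : Matrix I I ℂ) (d1 d2 : I → ℂ) (p r : I) :
    (R * Matrix.diagonal d1 * S * Matrix.diagonal d2) p r
      = (∑ x, (R p x * d1 x) * S x r) * d2 r := by
  rw [Matrix.mul_diagonal, Matrix.mul_apply]
  congr 1
  refine Finset.sum_congr rfl fun x _ => ?_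
  rw [Matrix.mul_diagonal]

lemma entry_RHS {I : Type*} [Fintype I] [DecidableEq I] (R S : Matrix I I ℂ) (d1 d2 : I → ℂ) (p r : I) :
    (Matrix.diagonal d2 * S * Matrix.diagonal d1 * R) p r
      = ∑ x, ((d2 p * S p x) * d1 x) * R x r := by
  rw [Matrix.mul_apply]
  refine Finset.sum_congr rfl fun x _ => ?_
  rw [Matrix.mul_diagonal, Matrix.diagonal_mul]


/-- type CI: a diagonal matrix `J = Σ_k a_k e_{kk}` with nonzero real entries
such that `a_1 a_{1'} = ⋯ = a_n a_{n'}` satisfies the reflection equation for the R-matrix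
of `Sp(2n)`. -/
theorem reflection_equation_CI (q : ℝ) (hq0 : 0 < q) (hq1 : q < 1)
    (n : ℕ) (hn : 1 ≤ n) (a : Fin (2 * n) → ℝ) (ha : ∀ k, a k ≠ 0)
    (hprod : ∀ j k : Fin (2 * n), (j : ℕ) < n → (k : ℕ) < n →
      a j * a (Fin.rev j) = a k * a (Fin.rev k)) :
    ReflectionEq (RmatSp q n) (∑ k : Fin (2 * n), ((a k : ℂ)) • e k k) := by
  unfold ReflectionEq
  rw [kron_diag_left a, kron_diag_right a]
  ext ⟨i, k⟩ ⟨j, l⟩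
  rw [entry_LHS, entry_RHS, Fintype.sum_prod_type, Fintype.sum_prod_type]
  simp only [ptransp]
  exact entries_eq q hq0 n a hprod i k j l
end
end

section
/- Let U and A be bialgebras over ℂ with a duality pairing ⟨·,·⟩, and define the left action of U on A by a.φ = Σ φ₍₁₎ ⟨a, φ₍₂₎⟩. Let V ⊆ U be a unital subalgebra satisfying the coideal property Δ(V) ⊆ V⊗U + U⊗V, and let 𝒥 be the left ideal of U spanned by the elements u·(a − ε(a)·1) with u ∈ U and a ∈ V. Then the set of 𝒥-invariants A^𝒥 = { φ ∈ A : x.φ = 0 for all x ∈ 𝒥 } is a unital subalgebra of A. (This is the claim that the coideal property of V guarantees that the invariant space A_q(G/K) is a subalgebra of A_q(G).) -/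
open TensorProduct

noncomputable section

variable {U A : Type*} [Ring U] [Ring A] [Bialgebra ℂ U] [Bialgebra ℂ A]

/-- The extension of a bilinear pairing `⟨·,·⟩ : U × A → ℂ` to tensor squares:
`⟨a ⊗ b, φ ⊗ ψ⟩ = ⟨a, φ⟩ ⟨b, ψ⟩`. -/
def pairTensor (p : U →ₗ[ℂ] Module.Dual ℂ A) :
    U ⊗[ℂ] U →ₗ[ℂ] Module.Dual ℂ (A ⊗[ℂ] A) :=
  (TensorProduct.dualDistrib ℂ A A).comp (TensorProduct.map p p)

/-- The left action of `U` on `A` induced by a pairing `p`, as a linear map on the tensor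
product: `a ⊗ φ ↦ a.φ = Σ φ₍₁₎ ⟨a, φ₍₂₎⟩`. -/
def actM (p : U →ₗ[ℂ] Module.Dual ℂ A) : U ⊗[ℂ] A →ₗ[ℂ] A :=
  (TensorProduct.rid ℂ A).toLinearMap
    ∘ₗ LinearMap.lTensor A (TensorProduct.lift p)
    ∘ₗ (TensorProduct.leftComm ℂ U A A).toLinearMap
    ∘ₗ LinearMap.lTensor U (Coalgebra.comul (R := ℂ) (A := A))

/-- For subspaces `X, Y ⊆ U`, the linear span in `U ⊗ U` of the elements `x ⊗ y` with
`x ∈ X`, `y ∈ Y`. -/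
def spanTensor {U : Type*} [Ring U] [Bialgebra ℂ U] (X Y : Submodule ℂ U) :
    Submodule ℂ (U ⊗[ℂ] U) :=
  Submodule.span ℂ {z | ∃ x ∈ X, ∃ y ∈ Y, z = x ⊗ₜ y}

/-!
The pairing axioms say that `p` is an algebra map from `U` into the convolution algebra `A*`, and
`a.φ` is the hit action of `p a` on `A`; so `A` is a `U`-module, and since `𝒥` is generated as a
left ideal by the `a - ε(a)` with `a ∈ V`, the `𝒥`-invariants form the joint eigenspace
`{φ | a.φ = ε(a) φ for all a ∈ V}`. Multiplicativity of the pairing in `A` gives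
`a.(φψ) = Σ (a₍₁₎.φ)(a₍₂₎.ψ)`. Write `Δa = s + t` with `s ∈ V ⊗ U` and `t ∈ U ⊗ V`: for
eigenvectors `φ, ψ` the `s`-part contracts to `φ · ((ε ⊗ id) s).ψ` and the `t`-part to
`((id ⊗ ε) t).φ · ψ`. Both contractions of `Δa` return `a`, so substituting
`(ε ⊗ id) s = a - (ε ⊗ id) t` and `(id ⊗ ε) t = a - (id ⊗ ε) s`, where now everything acting lies
in `V`, leaves a scalar multiple of `φψ`; counitality makes the scalar `ε(a)`.
-/

open WithConv
open Coalgebra (comul counit)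

section LeftHit

variable {R C D : Type*} [CommSemiring R] [AddCommMonoid C] [Module R C] [Coalgebra R C]
  [AddCommMonoid D] [Module R D] [Coalgebra R D]

variable (R C) in
/-- The hit action `f ⇀ c = Σ c₍₁₎ f(c₍₂₎)`. -/
def leftHit : (C →ₗ[R] R) →ₗ[R] C →ₗ[R] C :=
  LinearMap.lcomp R C comul ∘ₗ
    LinearMap.llcomp R (C ⊗[R] C) (C ⊗[R] R) C (TensorProduct.rid R C).toLinearMap
    ∘ₗ LinearMap.lTensorHom C

lemma leftHit_apply (f : C →ₗ[R] R) (c : C) :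
    leftHit R C f c = TensorProduct.rid R C (f.lTensor C (comul c)) := rfl

lemma leftHit_convMul (f g : C →ₗ[R] R) :
    leftHit R C (toConv f * toConv g).ofConv = leftHit R C f ∘ₗ leftHit R C g := by
  have key (t : C ⊗[R] C) :
      TensorProduct.rid R C ((LinearMap.mul' R R ∘ₗ map f g).lTensor C
        (TensorProduct.assoc R C C C (comul.rTensor C t))) =
      leftHit R C f (TensorProduct.rid R C (g.lTensor C t)) := by
    induction t with
    | zero => simp
    | add s t hs ht => simp only [map_add, hs, ht]
    | tmul x z =>
      rw [LinearMap.rTensor_tmul, LinearMap.lTensor_tmul, TensorProduct.rid_tmul,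
        map_smul, leftHit_apply]
      induction comul (R := R) x with
      | zero => simp
      | add s t hs ht => simp only [map_add, add_tmul, hs, ht, smul_add]
      | tmul u y => simp [mul_smul, smul_comm (f y)]
  ext c
  rw [LinearMap.comp_apply, leftHit_apply g c, ← key, Coalgebra.coassoc_apply, leftHit_apply,
    LinearMap.convMul_def, ofConv_toConv]
  simp only [LinearMap.lTensor_comp_apply]

variable (R C) in
def leftHitAlgHom : WithConv (C →ₗ[R] R) →ₐ[R] Module.End R C :=
  .ofLinearMap (leftHit R C ∘ₗ (WithConv.linearEquiv R (C →ₗ[R] R)).toLinearMap)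
    (by ext c; simp [leftHit_apply, LinearMap.convOne_def])
    (fun f g => leftHit_convMul f.ofConv g.ofConv)

lemma comp_leftHit_comp (π : C →ₗc[R] D) (f : D →ₗ[R] R) :
    π.toLinearMap ∘ₗ leftHit R C (f ∘ₗ π) = leftHit R D f ∘ₗ π := by
  ext c
  simp only [LinearMap.comp_apply, leftHit_apply, CoalgHom.coe_toLinearMap,
    ← CoalgHomClass.map_comp_comul_apply π c]
  induction comul (R := R) c with
  | zero => simp
  | add s t hs ht => simp only [map_add, hs, ht]
  | tmul x y => simp

lemma leftHit_dualDistrib (f : C →ₗ[R] R) (g : D →ₗ[R] R) :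
    leftHit R (C ⊗[R] D) (TensorProduct.dualDistrib R C D (f ⊗ₜ g)) =
      map (leftHit R C f) (leftHit R D g) := by
  ext c d
  simp only [AlgebraTensorModule.curry_apply, curry_apply, LinearMap.coe_restrictScalars,
    leftHit_apply, TensorProduct.comul_tmul, map_tmul]
  induction comul (R := R) c with
  | zero => simp
  | add s t hs ht => simp only [map_add, add_tmul, hs, ht]
  | tmul x y =>
    induction comul (R := R) d with
    | zero => simp
    | add s t hs ht => simp only [map_add, tmul_add, hs, ht]
    | tmul z w => simp [mul_smul, smul_comm (f _), smul_tmul']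

end LeftHit

theorem forall_mem_span_mul_sub_iff {R U M : Type*} [CommSemiring R] [Ring U] [Algebra R U]
    [AddCommGroup M] [Module R M] (ρ : U →ₐ[R] Module.End R M) (χ : U → R) (V : Set U) (m : M) :
    (∀ x ∈ Submodule.span R {x : U | ∃ u : U, ∃ a ∈ V, x = u * (a - χ a • 1)}, ρ x m = 0) ↔
      ∀ a ∈ V, ρ a m = χ a • m := by
  constructor
  · intro h a ha
    simpa [sub_eq_zero] using h _ (Submodule.subset_span ⟨1, a, ha, rfl⟩)
  · intro h x hx
    refine (Submodule.span_le (p := LinearMap.ker (LinearMap.applyₗ m ∘ₗ ρ.toLinearMap))).mpr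
      ?_ hx
    rintro _ ⟨u, a, ha, rfl⟩
    simp [h a ha]

section CounitContraction

variable {R C B : Type*} [CommSemiring R] [AddCommMonoid C] [Module R C] [CoalgebraStruct R C]
  [Semiring B] [Algebra R B]

variable (R C) in
abbrev counitLeft : C ⊗[R] C →ₗ[R] C := (TensorProduct.lid R C).toLinearMap ∘ₗ counit.rTensor C

variable (R C) in
abbrev counitRight : C ⊗[R] C →ₗ[R] C := (TensorProduct.rid R C).toLinearMap ∘ₗ counit.lTensor C

lemma counit_counitLeft (w : C ⊗[R] C) :
    counit (R := R) (counitLeft R C w) = counit (counitRight R C w) := by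
  induction w with
  | zero => simp
  | add s t hs ht => simp only [map_add, hs, ht]
  | tmul x y => simp [mul_comm]

lemma counitRight_mem_of_mem_map₂ {V W : Submodule R C} {w : C ⊗[R] C}
    (hw : w ∈ Submodule.map₂ (TensorProduct.mk R C C) V W) : counitRight R C w ∈ V :=
  (Submodule.map₂_le (r := V.comap _)).mpr (fun v hv c _ => by simpa using V.smul_mem _ hv) hw

lemma counitLeft_mem_of_mem_map₂ {V W : Submodule R C} {w : C ⊗[R] C}
    (hw : w ∈ Submodule.map₂ (TensorProduct.mk R C C) V W) : counitLeft R C w ∈ W :=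
  (Submodule.map₂_le (r := W.comap _)).mpr (fun c _ v hv => by simpa using W.smul_mem _ hv) hw

variable {V : Submodule R C} {f g : C →ₗ[R] B} {x y : B}

lemma mul'_map_of_mem_map₂_left (hf : ∀ v ∈ V, f v = counit (R := R) v • x) {w : C ⊗[R] C}
    (hw : w ∈ Submodule.map₂ (TensorProduct.mk R C C) V ⊤) :
    LinearMap.mul' R B (map f g w) = x * g (counitLeft R C w) :=
  (Submodule.map₂_le (r := LinearMap.eqLocus (LinearMap.mul' R B ∘ₗ map f g)
    (LinearMap.mulLeft R x ∘ₗ g ∘ₗ counitLeft R C))).mpr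
    (fun v hv c _ => by simp [hf v hv]) hw

lemma mul'_map_of_mem_map₂_right (hg : ∀ v ∈ V, g v = counit (R := R) v • y) {w : C ⊗[R] C}
    (hw : w ∈ Submodule.map₂ (TensorProduct.mk R C C) ⊤ V) :
    LinearMap.mul' R B (map f g w) = f (counitRight R C w) * y :=
  (Submodule.map₂_le (r := LinearMap.eqLocus (LinearMap.mul' R B ∘ₗ map f g)
    (LinearMap.mulRight R y ∘ₗ f ∘ₗ counitRight R C))).mpr
    (fun c _ v hv => by simp [hg v hv]) hw

end CounitContraction

theorem convMul_apply_eq_smul_mul {R C B : Type*} [CommRing R] [AddCommGroup C] [Module R C]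
    [Coalgebra R C] [Ring B] [Algebra R B] {V : Submodule R C} {f g : C →ₗ[R] B} {x y : B}
    (hf : ∀ v ∈ V, f v = counit (R := R) v • x) (hg : ∀ v ∈ V, g v = counit (R := R) v • y)
    {a : C} (ha : a ∈ V)
    (hΔ : comul a ∈ Submodule.map₂ (TensorProduct.mk R C C) V ⊤ ⊔
      Submodule.map₂ (TensorProduct.mk R C C) ⊤ V) :
    (toConv f * toConv g) a = counit (R := R) a • (x * y) := by
  obtain ⟨s, hs, t, ht, hst⟩ := Submodule.mem_sup.mp hΔ
  have hleft : counitLeft R C s = a - counitLeft R C t := by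
    rw [eq_sub_iff_add_eq, ← map_add, hst]
    simp
  have hright : counitRight R C t = a - counitRight R C s := by
    rw [eq_sub_iff_add_eq', ← map_add, hst]
    simp
  have hcounit : counit (counitLeft R C t) + counit (counitRight R C s) = counit (R := R) a := by
    rw [counit_counitLeft, ← map_add, ← map_add, add_comm, hst]
    simp
  rw [LinearMap.convMul_apply, ← hst, map_add, map_add, mul'_map_of_mem_map₂_left hf hs,
    mul'_map_of_mem_map₂_right hg ht, hleft, hright, map_sub, map_sub, hf a ha, hg a ha,
    hf _ (counitRight_mem_of_mem_map₂ hs), hg _ (counitLeft_mem_of_mem_map₂ ht), ← hcounit]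
  simp only [← sub_smul, mul_smul_comm, smul_mul_assoc, ← add_smul]
  congr 1
  ring

lemma dualDistrib_tmul_eq_mul'_comp_map {R M N : Type*} [CommSemiring R] [AddCommMonoid M]
    [Module R M] [AddCommMonoid N] [Module R N] (f : Module.Dual R M) (g : Module.Dual R N) :
    TensorProduct.dualDistrib R M N (f ⊗ₜ g) = LinearMap.mul' R R ∘ₗ map f g := by
  ext m n
  simp [TensorProduct.dualDistrib_apply]

lemma spanTensor_eq_map₂ (X Y : Submodule ℂ U) :
    spanTensor X Y = Submodule.map₂ (TensorProduct.mk ℂ U U) X Y := by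
  rw [Submodule.map₂_eq_span_image2, spanTensor]
  congr 1
  ext z
  simp [Set.mem_image2, eq_comm]

section Pairing

variable (p : U →ₗ[ℂ] Module.Dual ℂ A)

lemma actM_tmul (a : U) (φ : A) : actM p (a ⊗ₜ φ) = leftHit ℂ A (p a) φ := by
  simp only [actM, LinearMap.comp_apply, LinearEquiv.coe_coe, LinearMap.lTensor_tmul,
    leftHit_apply]
  induction comul (R := ℂ) φ with
  | zero => simp
  | add s t hs ht => simp only [tmul_add, map_add, hs, ht]
  | tmul x y => simp

def pairingAlgHom
    (hmulU : ∀ (a b : U) (φ : A),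
      p (a * b) φ = pairTensor p (a ⊗ₜ b) (Coalgebra.comul (R := ℂ) φ))
    (honeU : ∀ φ : A, p 1 φ = Coalgebra.counit (R := ℂ) φ) :
    U →ₐ[ℂ] WithConv (Module.Dual ℂ A) :=
  .ofLinearMap ((WithConv.linearEquiv ℂ (Module.Dual ℂ A)).symm.toLinearMap ∘ₗ p)
    (by ext φ; simp [honeU])
    (fun a b => by
      ext φ
      simp [hmulU, pairTensor, dualDistrib_tmul_eq_mul'_comp_map])

lemma leftHit_apply_mul_of_pairing
    (hmulA : ∀ (a : U) (φ ψ : A),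
      p a (φ * ψ) = pairTensor p (Coalgebra.comul (R := ℂ) a) (φ ⊗ₜ ψ))
    (a : U) (φ ψ : A) :
    leftHit ℂ A (p a) (φ * ψ) =
      (toConv ((leftHit ℂ A ∘ₗ p).flip φ) * toConv ((leftHit ℂ A ∘ₗ p).flip ψ)) a := by
  have hp : p a ∘ₗ LinearMap.mul' ℂ A = pairTensor p (comul a) := by
    ext φ ψ
    exact hmulA a φ ψ
  have hw (w : U ⊗[ℂ] U) :
      leftHit ℂ (A ⊗[ℂ] A) (pairTensor p w) (φ ⊗ₜ ψ) =
        map ((leftHit ℂ A ∘ₗ p).flip φ) ((leftHit ℂ A ∘ₗ p).flip ψ) w := by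
    induction w with
    | zero => simp
    | add s t hs ht => simp only [map_add, LinearMap.add_apply, hs, ht]
    | tmul x y => simp [pairTensor, leftHit_dualDistrib]
  -- multiplication `A ⊗ A → A` is a coalgebra map
  calc leftHit ℂ A (p a) (φ * ψ)
      = LinearMap.mul' ℂ A (leftHit ℂ (A ⊗[ℂ] A) (p a ∘ₗ LinearMap.mul' ℂ A) (φ ⊗ₜ ψ)) := by
        simpa using (LinearMap.congr_fun
          (comp_leftHit_comp (Bialgebra.mulCoalgHom ℂ A) (p a)) (φ ⊗ₜ ψ)).symm
    _ = _ := by rw [hp, hw]; rfl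

lemma leftHit_apply_one_of_pairing (honeA : ∀ a : U, p a 1 = Coalgebra.counit (R := ℂ) a)
    (a : U) : leftHit ℂ A (p a) 1 = counit (R := ℂ) a • 1 := by
  simp [leftHit_apply, Algebra.TensorProduct.one_def, honeA]

end Pairing

/-- if `V ⊆ U` is a unital subalgebra with the coideal property and `𝒥` is the
left ideal of `U` spanned by the elements `u (a − ε(a) 1)` with `u ∈ U`, `a ∈ V`, then the
space of `𝒥`-invariants `A^𝒥 = { φ | x.φ = 0 for all x ∈ 𝒥 }` is a unital subalgebra of
`A`. -/
theorem invariants_subalgebra (p : U →ₗ[ℂ] Module.Dual ℂ A)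
    (hmulU : ∀ (a b : U) (φ : A),
      p (a * b) φ = pairTensor p (a ⊗ₜ b) (Coalgebra.comul (R := ℂ) φ))
    (honeU : ∀ φ : A, p 1 φ = Coalgebra.counit (R := ℂ) φ)
    (hmulA : ∀ (a : U) (φ ψ : A),
      p a (φ * ψ) = pairTensor p (Coalgebra.comul (R := ℂ) a) (φ ⊗ₜ ψ))
    (honeA : ∀ a : U, p a 1 = Coalgebra.counit (R := ℂ) a)
    (V : Subalgebra ℂ U)
    (hV : ∀ v ∈ V, Coalgebra.comul (R := ℂ) v ∈
      spanTensor (Subalgebra.toSubmodule V) ⊤ + spanTensor ⊤ (Subalgebra.toSubmodule V)) :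
    ∃ S : Subalgebra ℂ A,
      (S : Set A) =
        {φ : A | ∀ x ∈ Submodule.span ℂ
          {x : U | ∃ u : U, ∃ a ∈ V, x = u * (a - Coalgebra.counit (R := ℂ) a • 1)},
            actM p (x ⊗ₜ φ) = 0} := by
  set ρ := (leftHitAlgHom ℂ A).comp (pairingAlgHom p hmulU honeU)
  have hρ (a : U) : ρ a = leftHit ℂ A (p a) := rfl
  let S : Submodule ℂ A := ⨅ a ∈ V, Module.End.eigenspace (ρ a) (counit a)
  have mem_S (φ : A) : φ ∈ S ↔ ∀ a ∈ V, leftHit ℂ A (p a) φ = counit (R := ℂ) a • φ := by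
    simp [S, hρ]
  refine ⟨S.toSubalgebra ((mem_S 1).mpr fun a _ => leftHit_apply_one_of_pairing p honeA a)
    fun φ ψ hφ hψ => (mem_S _).mpr fun a ha => ?_, ?_⟩
  · rw [leftHit_apply_mul_of_pairing p hmulA]
    refine convMul_apply_eq_smul_mul (V := Subalgebra.toSubmodule V) ((mem_S φ).mp hφ)
      ((mem_S ψ).mp hψ) ha ?_
    simpa [← Submodule.add_eq_sup, spanTensor_eq_map₂] using hV a ha
  · ext φ
    simpa [mem_S, actM_tmul, hρ] using
      (forall_mem_span_mul_sub_iff ρ (counit (R := ℂ)) V φ).symm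
end
end
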